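/- arXiv:math/0604456 — 12 statements merged into one kernel-verified Lean document; each statement's English description precedes it below -/
import Mathlib

section
/- If A ⊆ ℤ has positive upper density, i.e. limsup_{N→∞} |A ∩ [-N,N]| / (2N+1) > 0, then A contains infinitely many parallelograms: there are infinitely many triples (x, a, b) ∈ ℤ³ with a ≠ 0 and b ≠ 0 such that x, x+a, x+b, and x+a+b all belong to A. -/
/-!
Removing a finite set does not destroy positive upper density, so it suffices to find one
parallelogram avoiding any given finite set of base points. If `T ⊆ [-N, N]` has `k` elements
and `k (k - 1) > 4N`, the `k (k - 1)` ordered pairs of distinct elements of `T` have only `4N`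
possible nonzero differences, so two of them, `(u, v)` and `(u', v')`, share one; then
`u, v, u', v'` is a parallelogram. Positive upper density supplies such `N` with `k ≳ δ N`.
-/

open Filter Finset
open scoped Pointwise

def IsParallelogram {G : Type*} [AddCommGroup G] (A : Set G) (x a b : G) : Prop :=
  a ≠ 0 ∧ b ≠ 0 ∧ x ∈ A ∧ x + a ∈ A ∧ x + b ∈ A ∧ x + a + b ∈ A

theorem IsParallelogram.mono {G : Type*} [AddCommGroup G] {A B : Set G} {x a b : G}
    (h : IsParallelogram A x a b) (hAB : A ⊆ B) : IsParallelogram B x a b :=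
  let ⟨ha, hb, h₀, h₁, h₂, h₃⟩ := h
  ⟨ha, hb, hAB h₀, hAB h₁, hAB h₂, hAB h₃⟩

theorem Finset.exists_isParallelogram_of_card_sub_erase_zero_lt_card_offDiag
    {G : Type*} [AddCommGroup G] [DecidableEq G] (T : Finset G)
    (h : #((T - T).erase 0) < #T.offDiag) : ∃ x a b, IsParallelogram (T : Set G) x a b := by
  have hmaps : ∀ p ∈ T.offDiag, p.2 - p.1 ∈ (T - T).erase 0 := by
    rintro ⟨u, v⟩ huv
    obtain ⟨hu, hv, hne⟩ := mem_offDiag.mp huv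
    exact mem_erase.mpr ⟨sub_ne_zero.mpr hne.symm, sub_mem_sub hv hu⟩
  obtain ⟨⟨u, v⟩, hp, ⟨u', v'⟩, hq, hpq, hdiff⟩ :=
    exists_ne_map_eq_of_card_lt_of_maps_to h hmaps
  obtain ⟨hu, hv, huv⟩ := mem_offDiag.mp hp
  obtain ⟨hu', hv', -⟩ := mem_offDiag.mp hq
  simp only at hdiff
  refine ⟨u, v - u, u' - u, sub_ne_zero.mpr huv.symm, ?_, hu, ?_, ?_, ?_⟩
  · intro hb
    obtain rfl := sub_eq_zero.mp hb
    exact hpq (by rw [sub_left_inj.mp hdiff])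
  · rwa [add_sub_cancel]
  · rwa [add_sub_cancel]
  · have : u + (v - u) + (u' - u) = v' := by rw [← sub_add_cancel v' u', ← hdiff]; abel
    rwa [this]

theorem Finset.card_sub_erase_zero_le_of_subset_Icc {T : Finset ℤ} {N : ℕ}
    (hT : T ⊆ Icc (-(N : ℤ)) N) :
    #((T - T).erase 0) ≤ 4 * N := by
  have hsub : T - T ⊆ Icc (-(2 * N : ℤ)) (2 * N) := by
    intro d hd
    obtain ⟨u, hu, v, hv, rfl⟩ := Finset.mem_sub.mp hd
    have hu' := mem_Icc.mp (hT hu)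
    have hv' := mem_Icc.mp (hT hv)
    rw [mem_Icc]
    omega
  calc #((T - T).erase 0) ≤ #((Icc (-(2 * N : ℤ)) (2 * N)).erase 0) :=
        card_le_card (erase_subset_erase 0 hsub)
    _ = 4 * N := by
        rw [card_erase_of_mem (by simp), Int.card_Icc]
        omega

theorem exists_isParallelogram_of_ncard_inter_Icc (A : Set ℤ) (N : ℕ)
    (h : 4 * N < (A ∩ Set.Icc (-(N : ℤ)) N).ncard * ((A ∩ Set.Icc (-(N : ℤ)) N).ncard - 1)) :
    ∃ x a b, IsParallelogram A x a b := by
  have hS := (Set.finite_Icc (-(N : ℤ)) N).inter_of_right A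
  have hT : hS.toFinset ⊆ Icc (-(N : ℤ)) N := by
    rw [Set.Finite.toFinset_subset, coe_Icc]
    exact Set.inter_subset_right
  obtain ⟨x, a, b, hxab⟩ := exists_isParallelogram_of_card_sub_erase_zero_lt_card_offDiag
    hS.toFinset (by
      rw [offDiag_card, ← Nat.mul_sub_one, ← Set.ncard_eq_toFinset_card _ hS]
      exact (Finset.card_sub_erase_zero_le_of_subset_Icc hT).trans_lt h)
  exact ⟨x, a, b, hxab.mono (by simp)⟩

theorem exists_isParallelogram_of_frequently_dense (A : Set ℤ) {δ : ℝ} (hδ : 0 < δ)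
    (h : ∃ᶠ N : ℕ in atTop, δ * (2 * N + 1) < (A ∩ Set.Icc (-(N : ℤ)) N).ncard) :
    ∃ x a b, IsParallelogram A x a b := by
  obtain ⟨N, hdense, hlarge⟩ :=
    (h.and_eventually (eventually_ge_atTop ⌈2 / δ ^ 2 + 1 / δ⌉₊)).exists
  apply exists_isParallelogram_of_ncard_inter_Icc A N
  set k := (A ∩ Set.Icc (-(N : ℤ)) N).ncard
  have hN : 2 / δ ^ 2 + 1 / δ ≤ (N : ℝ) := Nat.ceil_le.mp hlarge
  have hδN : 1 ≤ δ * N := by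
    have : 0 ≤ 2 / δ ^ 2 := by positivity
    rw [← div_le_iff₀' hδ]
    linarith
  have hδsqN : 2 ≤ δ ^ 2 * N := by
    have : 0 ≤ 1 / δ := by positivity
    rw [← div_le_iff₀' (by positivity)]
    linarith
  have hk : 1 ≤ k := by exact_mod_cast (show (1 : ℝ) ≤ k by nlinarith)
  have hk' : δ * N ≤ ((k - 1 : ℕ) : ℝ) := by
    rw [Nat.cast_sub hk, Nat.cast_one]
    linarith
  have : (4 * N : ℝ) < k * (k - 1 : ℕ) :=
    calc (4 * N : ℝ) ≤ 2 * (δ ^ 2 * N) * N := by nlinarith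
      _ = (2 * δ * N) * (δ * N) := by ring
      _ < k * (k - 1 : ℕ) := by
        exact mul_lt_mul (by linarith) hk' (by positivity) (by positivity)
  exact_mod_cast this

theorem frequently_dense_diff_of_finite {A F : Set ℤ} (hF : F.Finite) {δ δ' : ℝ} (hδ' : δ' < δ)
    (h : ∃ᶠ N : ℕ in atTop, δ * (2 * N + 1) < (A ∩ Set.Icc (-(N : ℤ)) N).ncard) :
    ∃ᶠ N : ℕ in atTop, δ' * (2 * N + 1) < ((A \ F) ∩ Set.Icc (-(N : ℤ)) N).ncard := by
  refine (h.and_eventually (eventually_ge_atTop ⌈F.ncard / (δ - δ')⌉₊)).mono ?_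
  rintro N ⟨hdense, hlarge⟩
  have hsplit : (A ∩ Set.Icc (-(N : ℤ)) N).ncard ≤
      ((A \ F) ∩ Set.Icc (-(N : ℤ)) N).ncard + F.ncard := by
    refine (Set.ncard_le_ncard (t := ((A \ F) ∩ Set.Icc (-(N : ℤ)) N) ∪ F) ?_ ?_).trans
      (Set.ncard_union_le _ _)
    · intro z ⟨hzA, hzI⟩
      by_cases hzF : z ∈ F
      · exact Or.inr hzF
      · exact Or.inl ⟨⟨hzA, hzF⟩, hzI⟩
    · exact ((Set.finite_Icc _ _).inter_of_right _).union hF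
  have hF' : F.ncard ≤ (δ - δ') * (2 * N + 1) := by
    have := (div_le_iff₀ (sub_pos.mpr hδ')).mp (Nat.ceil_le.mp hlarge)
    nlinarith
  have : ((A ∩ Set.Icc (-(N : ℤ)) N).ncard : ℝ) ≤
      ((A \ F) ∩ Set.Icc (-(N : ℤ)) N).ncard + F.ncard := by exact_mod_cast hsplit
  linarith

theorem exists_frequently_dense_of_limsup_pos {A : Set ℤ}
    (hA : 0 < limsup (fun N : ℕ =>
      ((A ∩ Set.Icc (-(N : ℤ)) N).ncard : ℝ) / (2 * N + 1)) atTop) :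
    ∃ δ > (0 : ℝ), ∃ᶠ N : ℕ in atTop, δ * (2 * N + 1) < (A ∩ Set.Icc (-(N : ℤ)) N).ncard := by
  have hbdd : IsCoboundedUnder (· ≤ ·) atTop (fun N : ℕ =>
      ((A ∩ Set.Icc (-(N : ℤ)) N).ncard : ℝ) / (2 * N + 1)) :=
    (isBoundedUnder_of ⟨0, fun N => by positivity⟩).isCoboundedUnder_le
  refine ⟨_, half_pos hA, (frequently_lt_of_lt_limsup hbdd (half_lt_self hA)).mono ?_⟩
  intro N hN
  rwa [lt_div_iff₀ (by positivity)] at hN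

/-- A set of integers of positive upper density contains infinitely many
parallelograms `{x, x+a, x+b, x+a+b}` with `a, b ≠ 0`. -/
theorem parallelograms_of_pos_upper_density (A : Set ℤ)
    (hA : 0 < limsup (fun N : ℕ =>
      ((A ∩ Set.Icc (-(N : ℤ)) N).ncard : ℝ) / (2 * N + 1)) atTop) :
    {p : ℤ × ℤ × ℤ | p.2.1 ≠ 0 ∧ p.2.2 ≠ 0 ∧ p.1 ∈ A ∧ p.1 + p.2.1 ∈ A ∧
      p.1 + p.2.2 ∈ A ∧ p.1 + p.2.1 + p.2.2 ∈ A}.Infinite := by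
  set P := {p : ℤ × ℤ × ℤ | IsParallelogram A p.1 p.2.1 p.2.2}
  intro hP
  obtain ⟨δ, hδ, hdense⟩ := exists_frequently_dense_of_limsup_pos hA
  obtain ⟨x, a, b, hxab⟩ := exists_isParallelogram_of_frequently_dense (A \ Prod.fst '' P)
    (half_pos hδ) (frequently_dense_diff_of_finite (hP.image _) (half_lt_self hδ) hdense)
  exact hxab.2.2.1.2 ⟨(x, a, b), hxab.mono Set.sdiff_subset, rfl⟩
end

section
/- There exists an absolute constant c > 0 such that for every sufficiently small δ > 0 and every sufficiently large N (depending on δ), there exists a subset A ⊆ {1, …, N} with |A| ≥ δN such that the number of pairs (n, r) with r ≥ 1 and n, n+r, n+2r all in A is at most δ^{c·log(1/δ)} · N². -/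
/-!
Behrend's construction, blown up by blocks. Take a three-term-progression-free set
`S ⊆ [0, M)` of density `exp (-4 √(log M))` (Behrend) and place translates of it at the
start of consecutive blocks of length `L = 3M`. Since `2s < L` for `s ∈ S`, the equation
`a + c = 2b` in the union forces the residues mod `L` to satisfy `s₁ + s₃ = 2 s₂` with no
carry, hence `s₁ = s₂ = s₃`: every progression has common difference divisible by `L`, so
there are at most `N² / L` of them. With `δ = exp (-x)` and `M ≈ exp (x² / 32)`, Behrend's
density is `exp (-4 √(log M)) ≥ exp (-4x/5) ≥ 6δ`, which pays for the spacing `L = 3M` and the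
rounding of `N / L`, while `1 / L ≤ exp (-x² / 32) = δ ^ (log (1/δ) / 32)`.
-/

open Finset Real

def threeAPPairs (A : Finset ℕ) (N : ℕ) : Finset (ℕ × ℕ) :=
  (Icc 1 N ×ˢ Icc 1 N).filter fun p => p.1 ∈ A ∧ p.1 + p.2 ∈ A ∧ p.1 + 2 * p.2 ∈ A

lemma card_threeAPPairs_le_of_dvd {A : Finset ℕ} {L : ℕ}
    (h : ∀ n r, n ∈ A → n + r ∈ A → n + 2 * r ∈ A → L ∣ r) (N : ℕ) :
    #(threeAPPairs A N) ≤ N * (N / L) := by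
  have hIcc : Icc 1 N = Ioc 0 N := Icc_add_one_left_eq_Ioc 0 N
  have hsub : threeAPPairs A N ⊆ Icc 1 N ×ˢ {r ∈ Ioc 0 N | L ∣ r} := by
    rintro ⟨n, r⟩ hp
    simp only [threeAPPairs, mem_filter, mem_product] at hp
    obtain ⟨⟨hn, hr⟩, h₁, h₂, h₃⟩ := hp
    rw [← hIcc]
    exact mem_product.2 ⟨hn, mem_filter.2 ⟨hr, h n r h₁ h₂ h₃⟩⟩
  calc #(threeAPPairs A N) ≤ #(Icc 1 N ×ˢ {r ∈ Ioc 0 N | L ∣ r}) := card_le_card hsub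
    _ = N * (N / L) := by rw [card_product, Nat.card_Icc, Nat.Ioc_filter_dvd_card_eq_div]; rfl

def shiftedCopies (S : Finset ℕ) (L k : ℕ) : Finset ℕ :=
  (range k ×ˢ S).image fun p => p.1 * L + p.2 + 1

section ShiftedCopies

variable {S : Finset ℕ} {L k : ℕ}

lemma exists_of_mem_shiftedCopies {a : ℕ} (ha : a ∈ shiftedCopies S L k) :
    ∃ j < k, ∃ s ∈ S, a = j * L + s + 1 := by
  obtain ⟨⟨j, s⟩, hjs, rfl⟩ := mem_image.1 ha
  obtain ⟨hj, hs⟩ := mem_product.1 hjs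
  exact ⟨j, mem_range.1 hj, s, hs, rfl⟩

lemma eq_and_eq_of_mul_add_eq_mul_add {j₁ j₂ s₁ s₂ : ℕ} (h₁ : s₁ < L) (h₂ : s₂ < L)
    (h : j₁ * L + s₁ = j₂ * L + s₂) : j₁ = j₂ ∧ s₁ = s₂ := by
  have hL : 0 < L := by omega
  have hdiv := congrArg (· / L) h
  have hmod := congrArg (· % L) h
  simp only [add_comm (_ * L), Nat.add_mul_div_right _ _ hL, Nat.add_mul_mod_self_right,
    Nat.div_eq_of_lt h₁, Nat.div_eq_of_lt h₂, Nat.mod_eq_of_lt h₁, Nat.mod_eq_of_lt h₂,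
    zero_add] at hdiv hmod
  exact ⟨hdiv, hmod⟩

lemma shiftedCopies_subset_Icc (hS : ∀ s ∈ S, s < L) : shiftedCopies S L k ⊆ Icc 1 (k * L) := by
  intro a ha
  obtain ⟨j, hj, s, hs, rfl⟩ := exists_of_mem_shiftedCopies ha
  have hsL := hS s hs
  have : (j + 1) * L ≤ k * L := Nat.mul_le_mul_right L hj
  rw [mem_Icc]
  constructor <;> nlinarith

lemma card_shiftedCopies (hS : ∀ s ∈ S, s < L) : #(shiftedCopies S L k) = k * #S := by
  rw [shiftedCopies, card_image_of_injOn, card_product, card_range]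
  rintro ⟨j₁, s₁⟩ h₁ ⟨j₂, s₂⟩ h₂ heq
  simp only [coe_product, coe_range, Set.mem_prod, mem_coe] at h₁ h₂
  obtain ⟨rfl, rfl⟩ :=
    eq_and_eq_of_mul_add_eq_mul_add (hS s₁ h₁.2) (hS s₂ h₂.2) (Nat.add_right_cancel heq)
  rfl

lemma dvd_of_threeAP_mem_shiftedCopies (hS : ThreeAPFree (S : Set ℕ))
    (hSL : ∀ s ∈ S, 2 * s < L) {n r : ℕ} (h₁ : n ∈ shiftedCopies S L k)
    (h₂ : n + r ∈ shiftedCopies S L k) (h₃ : n + 2 * r ∈ shiftedCopies S L k) : L ∣ r := by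
  obtain ⟨j₁, -, s₁, hs₁, e₁⟩ := exists_of_mem_shiftedCopies h₁
  obtain ⟨j₂, -, s₂, hs₂, e₂⟩ := exists_of_mem_shiftedCopies h₂
  obtain ⟨j₃, -, s₃, hs₃, e₃⟩ := exists_of_mem_shiftedCopies h₃
  have b₁ := hSL s₁ hs₁
  have b₂ := hSL s₂ hs₂
  have b₃ := hSL s₃ hs₃
  have hsum : s₁ + s₃ = s₂ + s₂ :=
    (eq_and_eq_of_mul_add_eq_mul_add (L := L) (j₁ := j₁ + j₃) (j₂ := j₂ + j₂) (by omega) (by omega)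
      (by linarith)).2
  have hs : s₁ = s₂ := hS hs₁ hs₂ hs₃ hsum
  have hr : j₁ * L + r = j₂ * L := by omega
  exact (Nat.dvd_add_right (dvd_mul_left L j₁)).1 (hr ▸ dvd_mul_left L j₂)

end ShiftedCopies

theorem exists_subset_Icc_card_threeAPPairs_le {S : Finset ℕ} {L : ℕ}
    (hS : ThreeAPFree (S : Set ℕ)) (hSL : ∀ s ∈ S, 2 * s < L) (N : ℕ) :
    ∃ A ⊆ Icc 1 N, #A = N / L * #S ∧ #(threeAPPairs A N) ≤ N * (N / L) := by
  have hS' : ∀ s ∈ S, s < L := fun s hs => by have := hSL s hs; omega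
  refine ⟨shiftedCopies S L (N / L), ?_, card_shiftedCopies hS', ?_⟩
  · exact (shiftedCopies_subset_Icc hS').trans (Icc_subset_Icc_right (Nat.div_mul_le_self N L))
  · exact card_threeAPPairs_le_of_dvd
      (fun _ _ => dvd_of_threeAP_mem_shiftedCopies hS hSL) N

lemma le_two_mul_mul_div {N L : ℕ} (hL : 0 < L) (hLN : L ≤ N) : N ≤ 2 * L * (N / L) := by
  have h₁ := Nat.lt_mul_div_succ N hL
  have h₂ : 1 ≤ N / L := Nat.div_pos hLN hL
  nlinarith

lemma log_ceil_exp_le {y : ℝ} (hy : 0 ≤ y) : log ⌈exp y⌉₊ ≤ y + 1 := by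
  have h₁ : 2⁻¹ ≤ exp y := by linarith [one_le_exp hy]
  have h₂ : (2 : ℝ) ≤ exp 1 := by linarith [add_one_le_exp (1 : ℝ)]
  rw [log_le_iff_le_exp (by positivity), exp_add]
  calc (⌈exp y⌉₊ : ℝ) ≤ 2 * exp y := Nat.ceil_le_two_mul h₁
    _ ≤ exp y * exp 1 := by nlinarith [exp_pos y]

lemma six_mul_exp_neg_mul_le_rothNumberNat {x : ℝ} (hx : 25 ≤ x) {M : ℕ}
    (hM : log M ≤ (x / 5) ^ 2) : 6 * exp (-x) * M ≤ rothNumberNat M := by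
  have hsqrt : √(log M) ≤ x / 5 := (sqrt_le_left (by linarith)).2 hM
  have h₆ : (6 : ℝ) ≤ exp (x / 5) := by linarith [add_one_le_exp 5, exp_le_exp.2 (by linarith : 5 ≤ x / 5)]
  have hexp : 6 * exp (-x) ≤ exp (-4 * √(log M)) :=
    calc 6 * exp (-x) ≤ exp (x / 5) * exp (-x) := by gcongr
      _ = exp (-(4 * (x / 5))) := by rw [← exp_add]; ring_nf
      _ ≤ exp (-4 * √(log M)) := exp_le_exp.2 (by linarith)
  calc 6 * exp (-x) * M ≤ M * exp (-4 * √(log M)) := by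
        rw [mul_comm]; gcongr
    _ ≤ rothNumberNat M := Behrend.roth_lower_bound

/-- **Behrend's example.** There is an absolute constant `c > 0` so that for all
sufficiently small `δ > 0` and all sufficiently large `N` (depending on `δ`),
some subset `A ⊆ {1, …, N}` with `|A| ≥ δN` contains at most
`δ ^ (c log (1/δ)) · N²` three-term arithmetic progressions. -/
theorem behrend_example :
    ∃ c : ℝ, 0 < c ∧ ∃ δ₀ : ℝ, 0 < δ₀ ∧ ∀ δ : ℝ, 0 < δ → δ ≤ δ₀ →
      ∃ N₀ : ℕ, ∀ N : ℕ, N₀ ≤ N →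
        ∃ A : Finset ℕ, A ⊆ Finset.Icc 1 N ∧ δ * N ≤ A.card ∧
          ((((Finset.Icc 1 N) ×ˢ (Finset.Icc 1 N)).filter
              (fun p => p.1 ∈ A ∧ p.1 + p.2 ∈ A ∧ p.1 + 2 * p.2 ∈ A)).card : ℝ)
            ≤ δ ^ (c * Real.log (1 / δ)) * N ^ 2 := by
  refine ⟨1 / 32, by norm_num, exp (-25), exp_pos _, fun δ hδ hδ₀ => ?_⟩
  set x := log (1 / δ) with hx_def
  have hlog : log δ = -x := by rw [hx_def, one_div, log_inv, neg_neg]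
  have hδx : δ = exp (-x) := by rw [← hlog, exp_log hδ]
  have hx : 25 ≤ x := by linarith [exp_le_exp.1 (hδx ▸ hδ₀ : exp (-x) ≤ exp (-25))]
  set M := ⌈exp (x ^ 2 / 32)⌉₊
  have hM : exp (x ^ 2 / 32) ≤ M := Nat.le_ceil _
  obtain ⟨S, hSM, hScard, hS⟩ := rothNumberNat_spec M
  have hSdense : 6 * δ * M ≤ #S := hScard ▸ hδx ▸ six_mul_exp_neg_mul_le_rothNumberNat hx
    (by nlinarith [log_ceil_exp_le (by positivity : 0 ≤ x ^ 2 / 32)])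
  have hM0 : 0 < M := Nat.ceil_pos.2 (exp_pos _)
  refine ⟨3 * M, fun N hN => ?_⟩
  obtain ⟨A, hAN, hAcard, hAP⟩ := exists_subset_Icc_card_threeAPPairs_le (L := 3 * M) hS
    (fun s hs => by have := mem_range.1 (hSM hs); omega) N
  refine ⟨A, hAN, ?_, ?_⟩
  · have hN : (N : ℝ) ≤ 2 * (3 * M) * (N / (3 * M) : ℕ) := by
      exact_mod_cast le_two_mul_mul_div (by omega) hN
    rw [hAcard]
    push_cast
    nlinarith [(N / (3 * M) : ℕ).cast_nonneg (α := ℝ)]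
  · have hpow : δ ^ (1 / 32 * log (1 / δ)) = (exp (x ^ 2 / 32))⁻¹ := by
      rw [rpow_def_of_pos hδ, hlog, ← exp_neg]; congr 1; ring
    have hdiv : ((N / (3 * M) : ℕ) : ℝ) ≤ N / (3 * M : ℕ) := Nat.cast_div_le
    calc (#(threeAPPairs A N) : ℝ) ≤ N * (N / (3 * M) : ℕ) := by exact_mod_cast hAP
      _ ≤ N * (N / (3 * M : ℕ)) := by gcongr
      _ ≤ N * (N / exp (x ^ 2 / 32)) := by gcongr; push_cast; linarith
      _ = δ ^ (1 / 32 * log (1 / δ)) * N ^ 2 := by rw [hpow]; ring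
end

section
/- For every k ≥ 1 and m ≥ 1 there exists N ≥ 1 such that for every colouring c : {1, …, N} → {1, …, m} there exist a ≥ 1 and r ≥ 1 with a + (k−1)r ≤ N such that the arithmetic progression a, a+r, …, a+(k−1)r is monochromatic, i.e. c(a) = c(a+r) = ⋯ = c(a+(k−1)r). -/
/-- **Van der Waerden's theorem**, finitary version: for any `k, m ≥ 1` there is
an `N` such that every `m`-colouring of `{1, …, N}` admits a monochromatic
arithmetic progression of length `k`. -/
theorem van_der_waerden (k m : ℕ) (hk : 1 ≤ k) (hm : 1 ≤ m) :
    ∃ N : ℕ, 1 ≤ N ∧ ∀ c : ℕ → ℕ, (∀ n ∈ Finset.Icc 1 N, c n ∈ Finset.Icc 1 m) →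
      ∃ a r : ℕ, 1 ≤ a ∧ 1 ≤ r ∧ a + (k - 1) * r ≤ N ∧
        ∀ i : ℕ, i < k → c (a + i * r) = c a := by
  classical
  obtain ⟨ι, _inst, hι⟩ := Combinatorics.Line.exists_mono_in_high_dimension (Fin k) (Fin m)
  set N := 1 + Fintype.card ι * (k - 1) with hN
  refine ⟨N, by omega, ?_⟩
  intro c hc
  have hf : ∀ x : ι → Fin k, 1 + ∑ i, (x i : ℕ) ∈ Finset.Icc 1 N := by
    intro x
    simp only [Finset.mem_Icc]
    refine ⟨by omega, ?_⟩
    have h1 : ∑ i, (x i : ℕ) ≤ ∑ _i : ι, (k - 1) :=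
      Finset.sum_le_sum (fun i _ => by have := (x i).2; omega)
    simp only [Finset.sum_const, Finset.card_univ, smul_eq_mul] at h1
    omega
  have hC : ∀ x : ι → Fin k, c (1 + ∑ i, (x i : ℕ)) - 1 < m := by
    intro x
    have := hc _ (hf x)
    simp only [Finset.mem_Icc] at this
    omega
  obtain ⟨l, c0, hl⟩ := hι (fun x => (⟨c (1 + ∑ i, (x i : ℕ)) - 1, hC x⟩ : Fin m))
  set S := Finset.univ.filter (fun i => l.idxFun i = none) with hS
  set r := S.card with hr
  have hrpos : 1 ≤ r := by
    obtain ⟨i, hi⟩ := l.proper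
    exact Finset.card_pos.mpr ⟨i, by simp [hS, hi]⟩
  set x0 : Fin k := ⟨0, hk⟩ with hx0
  set b := ∑ i ∈ Sᶜ, ((l.idxFun i).getD x0 : ℕ) with hb
  have key : ∀ x : Fin k, 1 + ∑ i, ((l x) i : ℕ) = (1 + b) + (x : ℕ) * r := by
    intro x
    have hsplit : ∑ i ∈ S, ((l x) i : ℕ) + ∑ i ∈ Sᶜ, ((l x) i : ℕ)
        = ∑ i, ((l x) i : ℕ) := Finset.sum_add_sum_compl S _
    have h1 : ∑ i ∈ S, ((l x) i : ℕ) = (x : ℕ) * r := by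
      have hpt : ∀ i ∈ S, ((l x) i : ℕ) = (x : ℕ) := fun i hi => by
        simp only [hS, Finset.mem_filter] at hi
        show ((l.idxFun i).getD x : ℕ) = (x : ℕ)
        rw [hi.2, Option.getD_none]
      rw [Finset.sum_congr rfl hpt, Finset.sum_const, smul_eq_mul, mul_comm]
    have h2 : ∑ i ∈ Sᶜ, ((l x) i : ℕ) = b := by
      refine Finset.sum_congr rfl (fun i hi => ?_)
      simp only [hS, Finset.mem_compl, Finset.mem_filter, Finset.mem_univ, true_and] at hi
      obtain ⟨v, hv⟩ := Option.ne_none_iff_exists'.mp hi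
      show ((l.idxFun i).getD x : ℕ) = ((l.idxFun i).getD x0 : ℕ)
      rw [hv, Option.getD_some, Option.getD_some]
    omega
  have hcolor : ∀ x : Fin k, c ((1 + b) + (x : ℕ) * r) - 1 = (c0 : ℕ) := by
    intro x
    have := hl x
    have := congrArg (Fin.val) this
    simp only at this
    rw [key x] at this
    exact this
  have hmem : ∀ x : Fin k, (1 + b) + (x : ℕ) * r ∈ Finset.Icc 1 N := by
    intro x
    have := hf (l x)
    rwa [key x] at this
  have hge : ∀ x : Fin k, 1 ≤ c ((1 + b) + (x : ℕ) * r) := by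
    intro x
    have := hc _ (hmem x)
    simp only [Finset.mem_Icc] at this
    exact this.1
  refine ⟨1 + b, r, by omega, hrpos, ?_, ?_⟩
  · have hb_le : b ≤ Sᶜ.card * (k - 1) := by
      calc b ≤ ∑ _i ∈ Sᶜ, (k - 1) :=
          Finset.sum_le_sum (fun i _ => by
            cases h : l.idxFun i with
            | none => simp [hx0]
            | some v => have := v.2; simp [h]; omega)
        _ = Sᶜ.card * (k - 1) := by rw [Finset.sum_const, smul_eq_mul]
    have hcard : Sᶜ.card = Fintype.card ι - r := by
      rw [Finset.card_compl, hr]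
    have hrle : r ≤ Fintype.card ι := by
      rw [hr]; exact Finset.card_le_univ S
    rw [hcard] at hb_le
    have h3 : (Fintype.card ι - r) * (k - 1) + (k - 1) * r = Fintype.card ι * (k - 1) := by
      rw [mul_comm (k - 1) r, ← Nat.add_mul]; congr 1; omega
    omega
  · intro i hi
    have h1 := hcolor ⟨i, hi⟩
    have h2 := hcolor ⟨0, by omega⟩
    simp only [Fin.val_mk] at h1 h2
    have g1 := hge ⟨i, hi⟩
    have g2 := hge ⟨0, by omega⟩
    simp only [Fin.val_mk] at g1 g2
    have : (1 + b) + 0 * r = 1 + b := by omega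
    rw [this] at h2 g2
    omega
end

section
/- Let α be a real number and ε > 0. Then there exist infinitely many positive integers r such that ‖α r²‖_{ℝ/ℤ} < ε, where ‖x‖_{ℝ/ℤ} denotes the distance from x to the nearest integer. -/
/-! Colour `n` by the small cell of the compact circle containing `β n² / 2`. Van der Waerden
gives a monochromatic progression `b, b + a, b + 2a`, and along it the second difference of
`β n² / 2` is `β a²`, which is therefore close to `0`. Applied to `β = α (N + 1)²`, this yields
`r = (N + 1) a > N`. -/

universe u

theorem exists_finite_coloring_dist_lt (X : Type u) [PseudoMetricSpace X] [CompactSpace X]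
    {δ : ℝ} (hδ : 0 < δ) :
    ∃ (κ : Type u) (_ : Finite κ) (c : X → κ), ∀ x y, c x = c y → dist x y < δ := by
  obtain ⟨t, -, ht, hcover⟩ :=
    finite_cover_balls_of_compact (isCompact_univ (X := X)) (half_pos hδ)
  have hcentre (x : X) : ∃ z ∈ t, dist x z < δ / 2 := by
    simpa using hcover (Set.mem_univ x)
  choose c hct hc using hcentre
  refine ⟨t, ht.to_subtype, fun x ↦ ⟨c x, hct x⟩, fun x y hxy ↦ ?_⟩
  have hcxy : c x = c y := congrArg Subtype.val hxy
  calc dist x y ≤ dist x (c x) + dist y (c y) := by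
        rw [hcxy]; exact dist_triangle_right x y (c y)
    _ < δ / 2 + δ / 2 := add_lt_add (hc x) (hc y)
    _ = δ := add_halves δ

theorem exists_norm_secondDiff_lt {G : Type*} [SeminormedAddCommGroup G] [CompactSpace G]
    (f : ℕ → G) {ε : ℝ} (hε : 0 < ε) :
    ∃ a > 0, ∃ b, ‖(f (b + 2 * a) - f (b + a)) - (f (b + a) - f b)‖ < ε := by
  obtain ⟨κ, _, c, hc⟩ := exists_finite_coloring_dist_lt G (half_pos hε)
  obtain ⟨a, ha, b, col, hmono⟩ :=
    Combinatorics.exists_mono_homothetic_copy ({0, 1, 2} : Finset ℕ) (c ∘ f)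
  have h₀ : c (f b) = col := by simpa using hmono 0 (by simp)
  have h₁ : c (f (b + a)) = col := by simpa [add_comm] using hmono 1 (by simp)
  have h₂ : c (f (b + 2 * a)) = col := by simpa [add_comm, mul_comm] using hmono 2 (by simp)
  refine ⟨a, ha, b, ?_⟩
  calc ‖(f (b + 2 * a) - f (b + a)) - (f (b + a) - f b)‖
      ≤ ‖f (b + 2 * a) - f (b + a)‖ + ‖f (b + a) - f b‖ := norm_sub_le _ _
    _ < ε / 2 + ε / 2 := by
        rw [← dist_eq_norm, ← dist_eq_norm]
        exact add_lt_add (hc _ _ (h₂.trans h₁.symm)) (hc _ _ (h₁.trans h₀.symm))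
    _ = ε := add_halves ε

theorem AddCircle.exists_pos_norm_coe_mul_sq_lt (p : ℝ) [Fact (0 < p)] (β : ℝ) {ε : ℝ}
    (hε : 0 < ε) : ∃ d : ℕ, 0 < d ∧ ‖(↑(β * (d : ℝ) ^ 2) : AddCircle p)‖ < ε := by
  obtain ⟨a, ha, b, h⟩ :=
    exists_norm_secondDiff_lt (fun n : ℕ ↦ ((β / 2 * (n : ℝ) ^ 2 : ℝ) : AddCircle p)) hε
  refine ⟨a, ha, ?_⟩
  have hsecond : β * (a : ℝ) ^ 2 =
      (β / 2 * ((b + 2 * a : ℕ) : ℝ) ^ 2 - β / 2 * ((b + a : ℕ) : ℝ) ^ 2)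
        - (β / 2 * ((b + a : ℕ) : ℝ) ^ 2 - β / 2 * (b : ℝ) ^ 2) := by
    push_cast
    ring
  rwa [hsecond, AddCircle.coe_sub, AddCircle.coe_sub, AddCircle.coe_sub]

/-- **Quadratic recurrence.** For any real `α` and `ε > 0` there are infinitely
many positive integers `r` with `‖α r²‖_{ℝ/ℤ} < ε`. -/
theorem quadratic_recurrence (α : ℝ) (ε : ℝ) (hε : 0 < ε) :
    {r : ℕ | 0 < r ∧ ‖(↑(α * (r : ℝ) ^ 2) : AddCircle (1 : ℝ))‖ < ε}.Infinite := by
  refine Set.infinite_of_forall_exists_gt fun N ↦ ?_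
  obtain ⟨a, ha, hsmall⟩ :=
    AddCircle.exists_pos_norm_coe_mul_sq_lt 1 (α * ((N + 1 : ℕ) : ℝ) ^ 2) hε
  refine ⟨(N + 1) * a, ⟨by positivity, ?_⟩, by nlinarith⟩
  convert hsmall using 3
  push_cast
  ring
end

section
/- Let X be a nonempty compact topological space and T : X → X a homeomorphism. Then for every open cover (V_α)_{α ∈ A} of X and every k ≥ 2, there exist α ∈ A, a point x ∈ X, and an integer r > 0 such that T^{jr} x ∈ V_α for all j = 0, 1, …, k−1. -/
/-- **Topological multiple recurrence theorem** (Furstenberg–Weiss). For any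
topological dynamical system `(X, T)`, any open cover of `X` and any `k ≥ 2`,
some member of the cover contains a progression `{x, T^r x, …, T^{(k-1)r} x}`. -/
theorem topological_multiple_recurrence {X : Type*} [TopologicalSpace X]
    [CompactSpace X] [Nonempty X] (T : X ≃ₜ X) {ι : Type*} (V : ι → Set X)
    (hV : ∀ i, IsOpen (V i)) (hcover : (⋃ i, V i) = Set.univ)
    (k : ℕ) (hk : 2 ≤ k) :
    ∃ (i : ι) (x : X) (r : ℕ), 0 < r ∧ ∀ j : ℕ, j < k → (⇑T)^[j * r] x ∈ V i := by
  obtain ⟨x⟩ := ‹Nonempty X›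
  -- extract a finite subcover
  obtain ⟨t, ht⟩ := IsCompact.elim_finite_subcover isCompact_univ V hV
    (by rw [hcover])
  -- color ℕ by which member of the finite subcover contains `T^[m] x`
  have hmem : ∀ m : ℕ, ∃ i : {i // i ∈ t}, (⇑T)^[m] x ∈ V i := by
    intro m
    have := ht (Set.mem_univ ((⇑T)^[m] x))
    simp only [Set.mem_iUnion] at this
    obtain ⟨i, hi, hmem⟩ := this
    exact ⟨⟨i, hi⟩, hmem⟩
  choose C hC using hmem
  -- van der Waerden
  obtain ⟨a, ha, b, c, hmono⟩ :=
    Combinatorics.exists_mono_homothetic_copy (Finset.range k) C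
  refine ⟨c, (⇑T)^[b] x, a, ha, fun j hj => ?_⟩
  have := hmono j (Finset.mem_range.mpr hj)
  rw [← Function.iterate_add_apply]
  have hja : j * a = a • j := by simp [mul_comm]
  rw [hja, ← this]
  exact hC (a • j + b)
end

section
/- For all integers k ≥ 1, m ≥ 1, and j ≥ 1 there exists d₀ such that for all d ≥ d₀ the following holds: whenever Q ⊆ ℤ is a cube of dimension d and length k, and c : Q → {1, …, m} is any colouring of Q, there exists a cube Q' ⊆ Q of dimension j and length k on which c is constant. -/
/-- A cube of dimension `d` and length `k`: the set
`{a + n₁v₁ + ⋯ + n_d v_d : 0 ≤ nᵢ ≤ k - 1}` with `a ∈ ℤ`, the `vᵢ` positive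
integers, and all `k^d` elements distinct. -/
def IsCube (Q : Set ℤ) (d k : ℕ) : Prop :=
  ∃ (a : ℤ) (v : Fin d → ℤ), (∀ i, 0 < v i) ∧
    Set.InjOn (fun n : Fin d → ℕ => a + ∑ i, (n i : ℤ) * v i) {n | ∀ i, n i < k} ∧
    Q = (fun n : Fin d → ℕ => a + ∑ i, (n i : ℤ) * v i) '' {n | ∀ i, n i < k}

/-- **Hales–Jewett theorem**, cube version: for `k, m, j ≥ 1` and all
sufficiently large `d`, any `m`-colouring of a cube of dimension `d` and
length `k` admits a monochromatic subcube of dimension `j` and length `k`. -/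
theorem hales_jewett_cubes (k m j : ℕ) (hk : 1 ≤ k) (hm : 1 ≤ m) (hj : 1 ≤ j) :
    ∃ d₀ : ℕ, ∀ d : ℕ, d₀ ≤ d → ∀ Q : Set ℤ, IsCube Q d k →
      ∀ c : ℤ → ℕ, (∀ q ∈ Q, c q ∈ Finset.Icc 1 m) →
        ∃ Q' : Set ℤ, Q' ⊆ Q ∧ IsCube Q' j k ∧
          ∀ x ∈ Q', ∀ y ∈ Q', c x = c y := by
  classical
  obtain ⟨n, hn⟩ :=
    Combinatorics.Subspace.exists_mono_in_high_dimension_fin (Fin k) (Fin (m + 1)) (Fin j)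
  refine ⟨n, fun d hdn Q hQ c hc => ?_⟩
  obtain ⟨a, v, hv, hinj, rfl⟩ := hQ
  have hk0 : 0 < k := hk
  -- value of a lattice point
  set val : (Fin d → ℕ) → ℤ := fun N => a + ∑ i, (N i : ℤ) * v i with hval
  -- extend a point indexed by `Fin n` to one indexed by `Fin d`, padding with `0`
  set ext : (Fin n → ℕ) → Fin d → ℕ :=
    fun x i => if h : (i : ℕ) < n then x ⟨i, h⟩ else 0 with hextdef
  have hext_lt : ∀ x : Fin n → ℕ, (∀ i, x i < k) → ∀ i, ext x i < k := by
    intro x hx i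
    simp only [hextdef]
    split <;> [exact hx _; exact hk0]
  have hext_castLE : ∀ (x : Fin n → ℕ) (i : Fin n), ext x (Fin.castLE hdn i) = x i := by
    intro x i
    simp [hextdef]
  have hmem_map : ∀ i : Fin d,
      i ∈ Finset.univ.map (Fin.castLEEmb hdn) ↔ (i : ℕ) < n := by
    intro i
    simp only [Finset.mem_map, Finset.mem_univ, true_and]
    constructor
    · rintro ⟨i', rfl⟩; exact i'.2
    · intro h; exact ⟨⟨i, h⟩, rfl⟩
  have hext_sum : ∀ x : Fin n → ℕ,
      (∑ i, (ext x i : ℤ) * v i) = ∑ i : Fin n, (x i : ℤ) * v (Fin.castLE hdn i) := by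
    intro x
    rw [← Finset.sum_subset (Finset.subset_univ (Finset.univ.map (Fin.castLEEmb hdn)))
        (fun i _ hi => ?_), Finset.sum_map]
    · refine Finset.sum_congr rfl fun i _ => ?_
      rw [Fin.castLEEmb_apply, hext_castLE]
    · rw [hmem_map] at hi
      simp [hextdef, hi]
  -- the colouring of the hypercube
  set C : (Fin n → Fin k) → Fin (m + 1) := fun x =>
    ⟨min m (c (val (ext fun i => (x i : ℕ)))), Nat.lt_succ_of_le (Nat.min_le_left _ _)⟩ with hC
  obtain ⟨l, c₀, hl⟩ := hn C
  -- data for the subcube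
  set V : Fin j → ℤ := fun e =>
    ∑ i ∈ Finset.univ.filter fun i : Fin n => l.idxFun i = Sum.inr e,
      v (Fin.castLE hdn i) with hV
  set A : ℤ := a + ∑ i : Fin n,
      (Sum.elim (fun b : Fin k => ((b : ℕ) : ℤ)) (fun _ => 0) (l.idxFun i)) *
        v (Fin.castLE hdn i) with hA
  set N : (Fin j → ℕ) → Fin n → ℕ :=
    fun n' i => Sum.elim (fun b : Fin k => (b : ℕ)) n' (l.idxFun i) with hN
  have hN_lt : ∀ n' : Fin j → ℕ, (∀ e, n' e < k) → ∀ i, N n' i < k := by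
    intro n' h i
    simp only [hN]
    cases hli : l.idxFun i with
    | inl b => simpa using b.2
    | inr e => simpa using h e
  -- the key computation
  have hkey : ∀ n' : Fin j → ℕ,
      val (ext (N n')) = A + ∑ e, (n' e : ℤ) * V e := by
    intro n'
    rw [hval]
    simp only [hext_sum]
    rw [hA, add_assoc]
    congr 1
    have hsplit : ∀ i : Fin n, ((N n' i : ℤ)) * v (Fin.castLE hdn i) =
        (Sum.elim (fun b : Fin k => ((b : ℕ) : ℤ)) (fun _ => 0) (l.idxFun i)) *
          v (Fin.castLE hdn i) +
        (Sum.elim (fun _ : Fin k => (0 : ℤ)) (fun e => (n' e : ℤ)) (l.idxFun i)) *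
          v (Fin.castLE hdn i) := by
      intro i
      cases hli : l.idxFun i <;> simp [hN, hli]
    rw [Finset.sum_congr rfl fun i _ => hsplit i, Finset.sum_add_distrib]
    congr 1
    have helim : ∀ i : Fin n,
        (Sum.elim (fun _ : Fin k => (0 : ℤ)) (fun e => (n' e : ℤ)) (l.idxFun i)) *
          v (Fin.castLE hdn i) =
        ∑ e : Fin j, if l.idxFun i = Sum.inr e then (n' e : ℤ) * v (Fin.castLE hdn i)
          else 0 := by
      intro i
      cases hli : l.idxFun i with
      | inl b => simp [hli]
      | inr e₀ => simp [hli, Sum.inr.injEq, eq_comm]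
    rw [Finset.sum_congr rfl fun i _ => helim i, Finset.sum_comm]
    refine Finset.sum_congr rfl fun e _ => ?_
    rw [hV, Finset.mul_sum, Finset.sum_filter]
  -- the subcube
  refine ⟨(fun n' : Fin j → ℕ => A + ∑ e, (n' e : ℤ) * V e) '' {n' | ∀ e, n' e < k},
    ?_, ⟨A, V, ?_, ?_, rfl⟩, ?_⟩
  · -- subset
    rintro _ ⟨n', hn', rfl⟩
    exact ⟨ext (N n'), hext_lt _ (hN_lt _ hn'), hkey n'⟩
  · -- positivity of the V e
    intro e
    rw [hV]
    obtain ⟨i₀, hi₀⟩ := l.proper e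
    refine Finset.sum_pos (fun i _ => hv _) ⟨i₀, by simpa using hi₀⟩
  · -- injectivity
    intro n'₁ h₁ n'₂ h₂ heq
    simp only at heq
    have := hinj (hext_lt _ (hN_lt _ h₁)) (hext_lt _ (hN_lt _ h₂))
      (by rw [hkey, hkey]; exact heq)
    funext e
    obtain ⟨i₀, hi₀⟩ := l.proper e
    have h1 := congrFun this (Fin.castLE hdn i₀)
    rw [hext_castLE, hext_castLE] at h1
    simpa [hN, hi₀] using h1
  · -- monochromatic
    have key : ∀ x ∈ (fun n' : Fin j → ℕ => A + ∑ e, (n' e : ℤ) * V e) ''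
        {n' | ∀ e, n' e < k}, c x = min m (c x) ∧ min m (c x) = (c₀ : ℕ) := by
      rintro _ ⟨n', hn', rfl⟩
      show c (A + ∑ e, (n' e : ℤ) * V e) = min m (c (A + ∑ e, (n' e : ℤ) * V e)) ∧
        min m (c (A + ∑ e, (n' e : ℤ) * V e)) = (c₀ : ℕ)
      set x' : Fin j → Fin k := fun e => ⟨n' e, hn' e⟩ with hx'
      have hlx : (fun i => ((l x' i : Fin k) : ℕ)) = N n' := by
        funext i
        cases hli : l.idxFun i with
        | inl b => rw [l.apply_inl hli]; simp [hN, hli]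
        | inr e => rw [l.apply_inr hli]; simp [hN, hli, hx']
      have hq : A + ∑ e, (n' e : ℤ) * V e = val (ext fun i => ((l x' i : Fin k) : ℕ)) := by
        rw [hlx, hkey]
      have hmem : val (ext fun i => ((l x' i : Fin k) : ℕ)) ∈
          (fun N : Fin d → ℕ => a + ∑ i, (N i : ℤ) * v i) '' {N | ∀ i, N i < k} := by
        refine ⟨ext fun i => ((l x' i : Fin k) : ℕ), ?_, rfl⟩
        rw [hlx]
        exact hext_lt _ (hN_lt _ hn')
      have hcm := hc _ hmem
      rw [Finset.mem_Icc] at hcm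
      have hClx := hl x'
      rw [hC] at hClx
      have hval_eq : min m (c (val (ext fun i => ((l x' i : Fin k) : ℕ)))) = (c₀ : ℕ) :=
        congrArg Fin.val hClx
      constructor
      · rw [hq, min_eq_right hcm.2]
      · rw [hq, hval_eq]
    intro x hx y hy
    obtain ⟨hx1, hx2⟩ := key x hx
    obtain ⟨hy1, hy2⟩ := key y hy
    rw [hx1, hx2, hy1, hy2]
end

section
/- For every δ > 0 there exists c(δ) > 0 such that for every integer N ≥ 1 and every subset A ⊆ ℤ/Nℤ with |A| ≥ δN, the number of pairs (x, r) ∈ (ℤ/Nℤ)² with x, x+r, x+2r all in A (allowing r = 0) is at least c(δ) · N². -/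
/-!
Triangle removal. In the tripartite graph on three copies of `G` whose explicit triangles are
`{a, a + d, 2a + d}` for `a ∈ G`, `d ∈ A`, these `|G| |A|` triangles are edge-disjoint, so the
graph is far from triangle-free and, by triangle removal, has `≫ |G|³` triangles. Any triangle
`{a, b, c}` yields the progression `c - 2a, b - a, 2b - c` in `A`, and each progression arises
from at most `|G|` triangles.
-/

open Finset SimpleGraph TripartiteFromTriangles Sum3
open Fintype (card)

variable {G : Type*} [AddCommGroup G] [Fintype G] [DecidableEq G] {A : Finset G} {a b c : G}

def threeAPs (A : Finset G) : Finset (G × G) :=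
  univ.filter fun p ↦ p.1 ∈ A ∧ p.1 + p.2 ∈ A ∧ p.1 + 2 • p.2 ∈ A

def rothTriangleIndices (A : Finset G) : Finset (G × G × G) :=
  univ.filter fun t ↦ t.2.1 - t.1 ∈ A ∧ t.2.2 = t.1 + t.2.1

@[simp]
lemma mk_mem_rothTriangleIndices : (a, b, c) ∈ rothTriangleIndices A ↔ b - a ∈ A ∧ c = a + b := by
  simp [rothTriangleIndices]

instance rothTriangleIndices.instExplicitDisjoint : ExplicitDisjoint (rothTriangleIndices A) := by
  constructor <;> simp +contextual

lemma card_rothTriangleIndices : #(rothTriangleIndices A) = card G * #A := by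
  rw [← card_univ, ← card_product]
  refine card_nbij' (fun t ↦ (t.1, t.2.1 - t.1))
    (fun p : G × G ↦ (p.1, p.1 + p.2, p.1 + (p.1 + p.2))) ?_ ?_ ?_ ?_ <;>
    intro x hx <;> simp_all [rothTriangleIndices, Prod.ext_iff]

lemma graph_rothTriangleIndices_adj_in₀_in₁ :
    (graph (rothTriangleIndices A)).Adj (in₀ a) (in₁ b) ↔ b - a ∈ A := by
  simp

lemma graph_rothTriangleIndices_adj_in₀_in₂ :
    (graph (rothTriangleIndices A)).Adj (in₀ a) (in₂ c) ↔ c - 2 • a ∈ A := by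
  rw [Graph.in₀₂_iff]
  refine ⟨?_, fun h ↦ ⟨c - a, ?_⟩⟩
  · rintro ⟨b, hb⟩
    rw [mk_mem_rothTriangleIndices] at hb
    rw [hb.2]
    convert hb.1 using 1
    abel
  · rw [mk_mem_rothTriangleIndices]
    exact ⟨by convert h using 1; abel, by abel⟩

lemma graph_rothTriangleIndices_adj_in₁_in₂ :
    (graph (rothTriangleIndices A)).Adj (in₁ b) (in₂ c) ↔ 2 • b - c ∈ A := by
  rw [Graph.in₁₂_iff]
  refine ⟨?_, fun h ↦ ⟨c - b, ?_⟩⟩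
  · rintro ⟨a, ha⟩
    rw [mk_mem_rothTriangleIndices] at ha
    rw [ha.2]
    convert ha.1 using 1
    abel
  · rw [mk_mem_rothTriangleIndices]
    exact ⟨by convert h using 1; abel, by abel⟩

lemma mem_threeAPs_of_triangle (h₀ : c - 2 • a ∈ A) (h₁ : b - a ∈ A) (h₂ : 2 • b - c ∈ A) :
    (c - 2 • a, a + b - c) ∈ threeAPs A := by
  refine mem_filter.2 ⟨mem_univ _, h₀, ?_, ?_⟩
  · convert h₁ using 1; simp only [two_nsmul]; abel
  · convert h₂ using 1; simp only [two_nsmul]; abel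

lemma cliqueFinset_graph_rothTriangleIndices_subset :
    (graph (rothTriangleIndices A)).cliqueFinset 3 ⊆ (univ ×ˢ threeAPs A).image
      fun q : G × G × G ↦ toTriangle (q.1, q.1 + q.2.1 + q.2.2, 2 • q.1 + q.2.1) := by
  intro s hs
  rw [mem_cliqueFinset_iff, is3Clique_iff] at hs
  obtain ⟨x, y, z, hxy, hxz, hyz, rfl⟩ := hs
  obtain ⟨a, b, c, habc, hab, hac, hbc⟩ := graph_triple hxy hxz hyz
  rw [graph_rothTriangleIndices_adj_in₀_in₁] at hab
  rw [graph_rothTriangleIndices_adj_in₀_in₂] at hac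
  rw [graph_rothTriangleIndices_adj_in₁_in₂] at hbc
  refine mem_image.2 ⟨(a, c - 2 • a, a + b - c),
    mem_product.2 ⟨mem_univ _, mem_threeAPs_of_triangle hac hab hbc⟩, ?_⟩
  have hb : a + (c - 2 • a) + (a + b - c) = b := by abel
  have hc : 2 • a + (c - 2 • a) = c := by abel
  rw [toTriangle_apply, hb, hc, habc]

lemma card_cliqueFinset_graph_rothTriangleIndices_le :
    #((graph (rothTriangleIndices A)).cliqueFinset 3) ≤ card G * #(threeAPs A) :=
  (card_le_card cliqueFinset_graph_rothTriangleIndices_subset).trans <|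
    card_image_le.trans_eq <| by rw [card_product, card_univ]

theorem triangleRemovalBound_mul_card_sq_le_card_threeAPs {ε : ℝ} (hA : ε * card G ≤ #A) :
    27 * triangleRemovalBound (ε / 9) * card G ^ 2 ≤ #(threeAPs A) := by
  have hfar : (graph (rothTriangleIndices A)).FarFromTriangleFree (ε / 9) := by
    refine farFromTriangleFree _ ?_
    rw [card_rothTriangleIndices]
    push_cast
    calc ε / 9 * ((card G : ℝ) + card G + card G) ^ 2 = card G * (ε * card G) := by ring
      _ ≤ card G * #A := by gcongr
  have hcliques := hfar.le_card_cliqueFinset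
  rw [Fintype.card_sum, Fintype.card_sum] at hcliques
  have hG : (0 : ℝ) < card G := by positivity
  refine le_of_mul_le_mul_left ?_ hG
  calc (card G : ℝ) * (27 * triangleRemovalBound (ε / 9) * card G ^ 2)
      = triangleRemovalBound (ε / 9) * ((card G + (card G + card G) : ℕ) : ℝ) ^ 3 := by
        push_cast; ring
    _ ≤ (#((graph (rothTriangleIndices A)).cliqueFinset 3) : ℝ) := hcliques
    _ ≤ (card G : ℝ) * #(threeAPs A) := mod_cast card_cliqueFinset_graph_rothTriangleIndices_le

/-- **Roth's theorem, cyclic group version.** For every `δ > 0` there is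
`c(δ) > 0` so that any `A ⊆ ℤ/Nℤ` with `|A| ≥ δN` contains at least `c(δ)N²`
progressions `x, x+r, x+2r` (with `r = 0` allowed). -/
theorem roth_cyclic (δ : ℝ) (hδ : 0 < δ) :
    ∃ c : ℝ, 0 < c ∧ ∀ (N : ℕ) [NeZero N], ∀ A : Finset (ZMod N),
      δ * N ≤ A.card →
      c * (N : ℝ) ^ 2 ≤
        ((Finset.univ.filter (fun p : ZMod N × ZMod N =>
          p.1 ∈ A ∧ p.1 + p.2 ∈ A ∧ p.1 + 2 * p.2 ∈ A)).card : ℝ) := by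
  refine ⟨27 * triangleRemovalBound (δ / 9), by positivity, fun N _ A hA ↦ ?_⟩
  simpa only [threeAPs, two_nsmul, two_mul, ZMod.card] using
    triangleRemovalBound_mul_card_sq_le_card_threeAPs (A := A) (by rwa [ZMod.card])
end

section
/- For every δ > 0 there exists ε > 0 such that for every n ≥ 1 and every finite simple graph G on n vertices containing fewer than ε n³ triangles, one can delete at most δ n² edges from G to obtain a graph G' containing no triangles at all. -/
open Finset

namespace SimpleGraph

variable {V : Type*} [Fintype V] {G G' : SimpleGraph V}

lemma ncard_edgeSet_sdiff_of_le [DecidableRel G.Adj] [DecidableRel G'.Adj] (h : G' ≤ G) :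
    ((G.edgeSet \ G'.edgeSet).ncard : ℝ) = #G.edgeFinset - #G'.edgeFinset := by
  rw [Set.ncard_sdiff (edgeSet_mono h), Nat.cast_sub (Set.ncard_le_ncard (edgeSet_mono h)),
    ← coe_edgeFinset, ← coe_edgeFinset, Set.ncard_coe_finset, Set.ncard_coe_finset]

lemma ncard_cliqueSet (n : ℕ) [DecidableEq V] [DecidableRel G.Adj] :
    (G.cliqueSet n).ncard = #(G.cliqueFinset n) := by
  rw [← coe_cliqueFinset, Set.ncard_coe_finset]

end SimpleGraph

/-- **Triangle removal lemma.** For every `δ > 0` there is `ε > 0` such that any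
graph on `n` vertices with fewer than `ε n³` triangles can be made
triangle-free by deleting at most `δ n²` edges. -/
theorem triangle_removal (δ : ℝ) (hδ : 0 < δ) :
    ∃ ε : ℝ, 0 < ε ∧ ∀ (n : ℕ), 1 ≤ n → ∀ G : SimpleGraph (Fin n),
      ((G.cliqueSet 3).ncard : ℝ) < ε * (n : ℝ) ^ 3 →
      ∃ G' : SimpleGraph (Fin n), G' ≤ G ∧ G'.CliqueFree 3 ∧
        ((G.edgeSet \ G'.edgeSet).ncard : ℝ) ≤ δ * (n : ℝ) ^ 2 := by
  classical
  refine ⟨SimpleGraph.triangleRemovalBound δ, SimpleGraph.triangleRemovalBound_pos hδ,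
    fun n _ G hG ↦ ?_⟩
  rw [SimpleGraph.ncard_cliqueSet] at hG
  obtain ⟨G', hle, _, hedges, hfree⟩ :=
    SimpleGraph.triangle_removal (G := G) (ε := δ) (by simpa using hG)
  refine ⟨G', hle, hfree, ?_⟩
  rw [SimpleGraph.ncard_edgeSet_sdiff_of_le hle]
  simpa using hedges.le
end

section
/- For every δ > 0 there exists c(δ) > 0 such that every finite simple graph G on n vertices containing at least δ n² pairwise edge-disjoint triangles must contain at least c(δ) n³ triangles in total. -/
/-!
Edge-disjoint triangles must each lose an edge before the graph becomes triangle-free, so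
`δ n²` of them make the graph `δ`-far from triangle-free, and the triangle removal lemma turns
that into `c(δ) n³` triangles.
-/

open Finset SimpleGraph

namespace SimpleGraph

variable {α : Type*} [Fintype α] [DecidableEq α] {G : SimpleGraph α} [DecidableRel G.Adj]

lemma ncard_cliqueSet_s13 (k : ℕ) : (G.cliqueSet k).ncard = #(G.cliqueFinset k) := by
  rw [← coe_cliqueFinset, Set.ncard_coe_finset]

lemma farFromTriangleFree_of_edgeDisjoint_triangles {𝕜 : Type*} [Field 𝕜] [LinearOrder 𝕜]
    [IsStrictOrderedRing 𝕜] {ε : 𝕜} {𝒯 : Set (Finset α)} (h𝒯 : ∀ t ∈ 𝒯, G.IsNClique 3 t)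
    (hdisj : 𝒯.Pairwise fun t₁ t₂ ↦ #(t₁ ∩ t₂) ≤ 1)
    (hbig : ε * (Fintype.card α ^ 2 : ℕ) ≤ 𝒯.ncard) :
    G.FarFromTriangleFree ε := by
  have hfin : 𝒯.Finite := Set.toFinite 𝒯
  refine farFromTriangleFree_of_disjoint_triangles hfin.toFinset
    (fun t ht ↦ mem_cliqueFinset_iff.2 <| h𝒯 t <| hfin.mem_toFinset.1 ht) ?_
    (by rwa [← Set.ncard_eq_toFinset_card 𝒯 hfin])
  rw [hfin.coe_toFinset]
  exact hdisj.mono' fun t₁ t₂ h ↦ by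
    rw [← coe_inter]
    exact card_le_one_iff_subsingleton.1 h

end SimpleGraph

/-- **Triangle removal lemma, second formulation.** For every `δ > 0` there is
`c(δ) > 0` such that a graph on `n` vertices containing at least `δ n²`
pairwise edge-disjoint triangles contains at least `c(δ) n³` triangles. -/
theorem triangle_counting (δ : ℝ) (hδ : 0 < δ) :
    ∃ c : ℝ, 0 < c ∧ ∀ (n : ℕ) (G : SimpleGraph (Fin n))
      (𝒯 : Set (Finset (Fin n))),
      (∀ t ∈ 𝒯, G.IsNClique 3 t) →
      (∀ t₁ ∈ 𝒯, ∀ t₂ ∈ 𝒯, t₁ ≠ t₂ → (t₁ ∩ t₂).card ≤ 1) →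
      δ * (n : ℝ) ^ 2 ≤ 𝒯.ncard →
      c * (n : ℝ) ^ 3 ≤ ((G.cliqueSet 3).ncard : ℝ) := by
  classical
  refine ⟨triangleRemovalBound δ, triangleRemovalBound_pos hδ, ?_⟩
  intro n G 𝒯 h𝒯 hdisj hbig
  have hfar : G.FarFromTriangleFree δ :=
    farFromTriangleFree_of_edgeDisjoint_triangles h𝒯 hdisj (by simpa using hbig)
  simpa [ncard_cliqueSet_s13] using hfar.le_card_cliqueFinset
end

section
/- Let (X, μ_X) and (Y, μ_Y) be probability spaces and let f₀₀, f₀₁, f₁₀, f₁₁ : X×Y → ℝ be bounded measurable functions. Then |∫_X ∫_X ∫_Y ∫_Y f₀₀(x,y) f₀₁(x,y') f₁₀(x',y) f₁₁(x',y') dμ_X(x) dμ_X(x') dμ_Y(y) dμ_Y(y')| ≤ ‖f₀₀‖_{□²} · ‖f₀₁‖_{□²} · ‖f₁₀‖_{□²} · ‖f₁₁‖_{□²}. -/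
open MeasureTheory

section Helpers

variable {α : Type*} [MeasurableSpace α] {μ : Measure α}

/-- Cauchy–Schwarz for integrals of bounded strongly measurable functions. -/
lemma sq_integral_mul_le_cs [IsFiniteMeasure μ] {u v : α → ℝ} {Cu Cv : ℝ}
    (hu : StronglyMeasurable u) (hv : StronglyMeasurable v)
    (hbu : ∀ a, |u a| ≤ Cu) (hbv : ∀ a, |v a| ≤ Cv) :
    (∫ a, u a * v a ∂μ) ^ 2 ≤ (∫ a, u a * u a ∂μ) * (∫ a, v a * v a ∂μ) := by
  have key : ∀ (p q : α → ℝ) (Cp Cq : ℝ), StronglyMeasurable p → StronglyMeasurable q →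
      (∀ a, |p a| ≤ Cp) → (∀ a, |q a| ≤ Cq) → Integrable (fun a => p a * q a) μ := by
    intro p q Cp Cq hp hq hbp hbq
    refine (integrable_const (Cp * Cq)).mono' (hp.mul hq).aestronglyMeasurable ?_
    filter_upwards with a
    simp only [Real.norm_eq_abs, abs_mul]
    exact mul_le_mul (hbp a) (hbq a) (abs_nonneg _) ((abs_nonneg _).trans (hbp a))
  have huu := key u u Cu Cu hu hu hbu hbu
  have hvv := key v v Cv Cv hv hv hbv hbv
  have huv := key u v Cu Cv hu hv hbu hbv
  set A := ∫ a, u a * u a ∂μ with hA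
  set B := ∫ a, v a * v a ∂μ with hB
  set C := ∫ a, u a * v a ∂μ with hC
  have quad : ∀ t : ℝ, 0 ≤ A * (t * t) + (2 * C) * t + B := by
    intro t
    have h1 : ∀ a, (t * u a + v a) * (t * u a + v a)
        = t * t * (u a * u a) + 2 * t * (u a * v a) + v a * v a := fun a => by ring
    calc (0:ℝ) ≤ ∫ a, (t * u a + v a) * (t * u a + v a) ∂μ :=
          integral_nonneg fun a => mul_self_nonneg _
      _ = t * t * A + 2 * t * C + B := by
          simp only [h1]
          have i1 : Integrable (fun a => t * t * (u a * u a)) μ := huu.const_mul _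
          have i2 : Integrable (fun a => 2 * t * (u a * v a)) μ := huv.const_mul _
          have i12 : Integrable (fun a => t * t * (u a * u a) + 2 * t * (u a * v a)) μ :=
            i1.add i2
          rw [integral_add i12 hvv, integral_add i1 i2, integral_const_mul,
            integral_const_mul]
      _ = A * (t * t) + (2 * C) * t + B := by ring
  have hd := discrim_le_zero quad
  rw [discrim] at hd
  nlinarith [hd]

end Helpers

section Gowers

variable {X Y : Type*} [MeasurableSpace X] [MeasurableSpace Y]
  (μX : Measure X) (μY : Measure Y)

/-- The four-function box integrand. -/
def boxK (f₀₀ f₀₁ f₁₀ f₁₁ : X × Y → ℝ) : (X × X) × (Y × Y) → ℝ := fun p =>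
  f₀₀ (p.1.1, p.2.1) * f₀₁ (p.1.1, p.2.2) * f₁₀ (p.1.2, p.2.1) * f₁₁ (p.1.2, p.2.2)

/-- The four-function box integral. -/
noncomputable def boxJ (f₀₀ f₀₁ f₁₀ f₁₁ : X × Y → ℝ) : ℝ :=
  ∫ p, boxK f₀₀ f₀₁ f₁₀ f₁₁ p ∂((μX.prod μX).prod (μY.prod μY))

variable {f₀₀ f₀₁ f₁₀ f₁₁ : X × Y → ℝ} {D₀₀ D₀₁ D₁₀ D₁₁ : ℝ}

lemma boxK_measurable (h₀₀ : Measurable f₀₀) (h₀₁ : Measurable f₀₁)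
    (h₁₀ : Measurable f₁₀) (h₁₁ : Measurable f₁₁) :
    Measurable (boxK f₀₀ f₀₁ f₁₀ f₁₁) :=
  (((h₀₀.comp (measurable_fst.fst.prodMk measurable_snd.fst)).mul
    (h₀₁.comp (measurable_fst.fst.prodMk measurable_snd.snd))).mul
    (h₁₀.comp (measurable_fst.snd.prodMk measurable_snd.fst))).mul
    (h₁₁.comp (measurable_fst.snd.prodMk measurable_snd.snd))

lemma boxK_abs_le (hD₀₀ : 0 ≤ D₀₀) (hD₀₁ : 0 ≤ D₀₁) (hD₁₀ : 0 ≤ D₁₀)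
    (hb₀₀ : ∀ p, |f₀₀ p| ≤ D₀₀) (hb₀₁ : ∀ p, |f₀₁ p| ≤ D₀₁)
    (hb₁₀ : ∀ p, |f₁₀ p| ≤ D₁₀) (hb₁₁ : ∀ p, |f₁₁ p| ≤ D₁₁) (p : (X × X) × (Y × Y)) :
    |boxK f₀₀ f₀₁ f₁₀ f₁₁ p| ≤ D₀₀ * D₀₁ * D₁₀ * D₁₁ := by
  simp only [boxK, abs_mul]
  exact mul_le_mul (mul_le_mul (mul_le_mul (hb₀₀ _) (hb₀₁ _) (abs_nonneg _) hD₀₀)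
    (hb₁₀ _) (abs_nonneg _) (mul_nonneg hD₀₀ hD₀₁)) (hb₁₁ _) (abs_nonneg _)
    (mul_nonneg (mul_nonneg hD₀₀ hD₀₁) hD₁₀)

lemma boxK_integrable [IsProbabilityMeasure μX] [IsProbabilityMeasure μY]
    (h₀₀ : Measurable f₀₀) (h₀₁ : Measurable f₀₁)
    (h₁₀ : Measurable f₁₀) (h₁₁ : Measurable f₁₁)
    (hD₀₀ : 0 ≤ D₀₀) (hD₀₁ : 0 ≤ D₀₁) (hD₁₀ : 0 ≤ D₁₀)
    (hb₀₀ : ∀ p, |f₀₀ p| ≤ D₀₀) (hb₀₁ : ∀ p, |f₀₁ p| ≤ D₀₁)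
    (hb₁₀ : ∀ p, |f₁₀ p| ≤ D₁₀) (hb₁₁ : ∀ p, |f₁₁ p| ≤ D₁₁) :
    Integrable (boxK f₀₀ f₀₁ f₁₀ f₁₁) ((μX.prod μX).prod (μY.prod μY)) := by
  refine (integrable_const (D₀₀ * D₀₁ * D₁₀ * D₁₁)).mono'
    (boxK_measurable h₀₀ h₀₁ h₁₀ h₁₁).aestronglyMeasurable ?_
  filter_upwards with p
  simpa using boxK_abs_le hD₀₀ hD₀₁ hD₁₀ hb₀₀ hb₀₁ hb₁₀ hb₁₁ p


lemma boxJ_eq_row [IsProbabilityMeasure μX] [IsProbabilityMeasure μY] (hK : Integrable (boxK f₀₀ f₀₁ f₁₀ f₁₁) ((μX.prod μX).prod (μY.prod μY))) :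
    boxJ μX μY f₀₀ f₀₁ f₁₀ f₁₁
      = ∫ q, (∫ x, f₀₀ (x, q.1) * f₀₁ (x, q.2) ∂μX) * (∫ x, f₁₀ (x, q.1) * f₁₁ (x, q.2) ∂μX)
          ∂(μY.prod μY) := by
  have h2 : ∀ q : Y × Y,
      (∫ a : X × X, f₀₀ (a.1, q.1) * f₀₁ (a.1, q.2) * (f₁₀ (a.2, q.1) * f₁₁ (a.2, q.2))
        ∂(μX.prod μX))
      = (∫ x, f₀₀ (x, q.1) * f₀₁ (x, q.2) ∂μX) * (∫ x, f₁₀ (x, q.1) * f₁₁ (x, q.2) ∂μX) :=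
    fun q => integral_prod_mul (fun x => f₀₀ (x, q.1) * f₀₁ (x, q.2))
      (fun x => f₁₀ (x, q.1) * f₁₁ (x, q.2))
  calc boxJ μX μY f₀₀ f₀₁ f₁₀ f₁₁
      = ∫ a, ∫ q, boxK f₀₀ f₀₁ f₁₀ f₁₁ (a, q) ∂(μY.prod μY) ∂(μX.prod μX) :=
        integral_prod _ hK
    _ = ∫ q, ∫ a, boxK f₀₀ f₀₁ f₁₀ f₁₁ (a, q) ∂(μX.prod μX) ∂(μY.prod μY) :=
        integral_integral_swap hK
    _ = _ := by
        refine integral_congr_ae (Filter.Eventually.of_forall fun q => ?_)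
        dsimp only
        rw [← h2 q]
        refine integral_congr_ae (Filter.Eventually.of_forall fun a => ?_)
        simp only [boxK]; ring

lemma boxJ_eq_col [IsProbabilityMeasure μX] [IsProbabilityMeasure μY] (hK : Integrable (boxK f₀₀ f₀₁ f₁₀ f₁₁) ((μX.prod μX).prod (μY.prod μY))) :
    boxJ μX μY f₀₀ f₀₁ f₁₀ f₁₁
      = ∫ a, (∫ y, f₀₀ (a.1, y) * f₁₀ (a.2, y) ∂μY) * (∫ y, f₀₁ (a.1, y) * f₁₁ (a.2, y) ∂μY)
          ∂(μX.prod μX) := by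
  have h2 : ∀ a : X × X,
      (∫ q : Y × Y, f₀₀ (a.1, q.1) * f₁₀ (a.2, q.1) * (f₀₁ (a.1, q.2) * f₁₁ (a.2, q.2))
        ∂(μY.prod μY))
      = (∫ y, f₀₀ (a.1, y) * f₁₀ (a.2, y) ∂μY) * (∫ y, f₀₁ (a.1, y) * f₁₁ (a.2, y) ∂μY) :=
    fun a => integral_prod_mul (fun y => f₀₀ (a.1, y) * f₁₀ (a.2, y))
      (fun y => f₀₁ (a.1, y) * f₁₁ (a.2, y))
  calc boxJ μX μY f₀₀ f₀₁ f₁₀ f₁₁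
      = ∫ a, ∫ q, boxK f₀₀ f₀₁ f₁₀ f₁₁ (a, q) ∂(μY.prod μY) ∂(μX.prod μX) :=
        integral_prod _ hK
    _ = _ := by
        refine integral_congr_ae (Filter.Eventually.of_forall fun a => ?_)
        dsimp only
        rw [← h2 a]
        refine integral_congr_ae (Filter.Eventually.of_forall fun q => ?_)
        simp only [boxK]; ring


lemma iterated_eq_boxJ [IsProbabilityMeasure μX] [IsProbabilityMeasure μY]
    (h₀₀ : Measurable f₀₀) (h₀₁ : Measurable f₀₁)
    (h₁₀ : Measurable f₁₀) (h₁₁ : Measurable f₁₁)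
    (hD₀₀ : 0 ≤ D₀₀) (hD₀₁ : 0 ≤ D₀₁) (hD₁₀ : 0 ≤ D₁₀)
    (hb₀₀ : ∀ p, |f₀₀ p| ≤ D₀₀) (hb₀₁ : ∀ p, |f₀₁ p| ≤ D₀₁)
    (hb₁₀ : ∀ p, |f₁₀ p| ≤ D₁₀) (hb₁₁ : ∀ p, |f₁₁ p| ≤ D₁₁) :
    (∫ x, ∫ x', ∫ y, ∫ y',
        f₀₀ (x, y) * f₀₁ (x, y') * f₁₀ (x', y) * f₁₁ (x', y') ∂μY ∂μY ∂μX ∂μX)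
      = boxJ μX μY f₀₀ f₀₁ f₁₀ f₁₁ := by
  have hK := boxK_integrable μX μY h₀₀ h₀₁ h₁₀ h₁₁ hD₀₀ hD₀₁ hD₁₀ hb₀₀ hb₀₁ hb₁₀ hb₁₁
  have inner_int : ∀ x x' : X,
      Integrable (Function.uncurry fun y y' =>
        f₀₀ (x, y) * f₀₁ (x, y') * f₁₀ (x', y) * f₁₁ (x', y')) (μY.prod μY) := by
    intro x x'
    have hm : Measurable fun q : Y × Y =>
        f₀₀ (x, q.1) * f₀₁ (x, q.2) * f₁₀ (x', q.1) * f₁₁ (x', q.2) :=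
      (((h₀₀.comp (measurable_const.prodMk measurable_fst)).mul
        (h₀₁.comp (measurable_const.prodMk measurable_snd))).mul
        (h₁₀.comp (measurable_const.prodMk measurable_fst))).mul
        (h₁₁.comp (measurable_const.prodMk measurable_snd))
    refine (integrable_const (D₀₀ * D₀₁ * D₁₀ * D₁₁)).mono' hm.aestronglyMeasurable ?_
    filter_upwards with q
    rw [Real.norm_eq_abs]
    exact boxK_abs_le hD₀₀ hD₀₁ hD₁₀ hb₀₀ hb₀₁ hb₁₀ hb₁₁ ((x, x'), q)
  have e1 : ∀ x x' : X,
      (∫ y, ∫ y', f₀₀ (x, y) * f₀₁ (x, y') * f₁₀ (x', y) * f₁₁ (x', y') ∂μY ∂μY)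
      = ∫ q : Y × Y, f₀₀ (x, q.1) * f₀₁ (x, q.2) * f₁₀ (x', q.1) * f₁₁ (x', q.2)
          ∂(μY.prod μY) := fun x x' => integral_integral (inner_int x x')
  calc (∫ x, ∫ x', ∫ y, ∫ y',
        f₀₀ (x, y) * f₀₁ (x, y') * f₁₀ (x', y) * f₁₁ (x', y') ∂μY ∂μY ∂μX ∂μX)
      = ∫ x, ∫ x', ∫ q : Y × Y,
          f₀₀ (x, q.1) * f₀₁ (x, q.2) * f₁₀ (x', q.1) * f₁₁ (x', q.2)
          ∂(μY.prod μY) ∂μX ∂μX := by simp only [e1]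
    _ = ∫ a : X × X, ∫ q : Y × Y,
          f₀₀ (a.1, q.1) * f₀₁ (a.1, q.2) * f₁₀ (a.2, q.1) * f₁₁ (a.2, q.2)
          ∂(μY.prod μY) ∂(μX.prod μX) := integral_integral hK.integral_prod_left
    _ = boxJ μX μY f₀₀ f₀₁ f₁₀ f₁₁ := (integral_prod _ hK).symm

lemma row_sm [SFinite μX] {f g : X × Y → ℝ} (hf : Measurable f) (hg : Measurable g) :
    StronglyMeasurable fun q : Y × Y => ∫ x, f (x, q.1) * g (x, q.2) ∂μX := by
  have hm : Measurable fun r : (Y × Y) × X => f (r.2, r.1.1) * g (r.2, r.1.2) :=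
    (hf.comp (measurable_snd.prodMk measurable_fst.fst)).mul
      (hg.comp (measurable_snd.prodMk measurable_fst.snd))
  exact hm.stronglyMeasurable.integral_prod_right'

lemma col_sm [SFinite μY] {f g : X × Y → ℝ} (hf : Measurable f) (hg : Measurable g) :
    StronglyMeasurable fun a : X × X => ∫ y, f (a.1, y) * g (a.2, y) ∂μY := by
  have hm : Measurable fun r : (X × X) × Y => f (r.1.1, r.2) * g (r.1.2, r.2) :=
    (hf.comp (measurable_fst.fst.prodMk measurable_snd)).mul
      (hg.comp (measurable_fst.snd.prodMk measurable_snd))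
  exact hm.stronglyMeasurable.integral_prod_right'

end Gowers

lemma int_mul_abs_le {α : Type*} [MeasurableSpace α] {μ : Measure α} [IsProbabilityMeasure μ]
    {u v : α → ℝ} {Cu Cv : ℝ} (hbu : ∀ a, |u a| ≤ Cu) (hbv : ∀ a, |v a| ≤ Cv) (hCu : 0 ≤ Cu) :
    |∫ a, u a * v a ∂μ| ≤ Cu * Cv := by
  have h := norm_integral_le_of_norm_le_const (μ := μ) (f := fun a => u a * v a)
    (C := Cu * Cv) ?_
  · simpa using h
  · filter_upwards with a
    rw [Real.norm_eq_abs, abs_mul]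
    exact mul_le_mul (hbu a) (hbv a) (abs_nonneg _) hCu

section Gowers2

variable {X Y : Type*} [MeasurableSpace X] [MeasurableSpace Y]
  (μX : Measure X) (μY : Measure Y)
  [IsProbabilityMeasure μX] [IsProbabilityMeasure μY]

lemma boxJ_mixed {f g : X × Y → ℝ} {Df Dg : ℝ} (hf : Measurable f) (hg : Measurable g)
    (hDf : 0 ≤ Df) (hDg : 0 ≤ Dg) (hbf : ∀ p, |f p| ≤ Df) (hbg : ∀ p, |g p| ≤ Dg) :
    0 ≤ boxJ μX μY f g f g ∧
      (boxJ μX μY f g f g) ^ 2 ≤ boxJ μX μY f f f f * boxJ μX μY g g g g := by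
  have hKfg := boxK_integrable μX μY hf hg hf hg hDf hDg hDf hbf hbg hbf hbg
  have hKff := boxK_integrable μX μY hf hf hf hf hDf hDf hDf hbf hbf hbf hbf
  have hKgg := boxK_integrable μX μY hg hg hg hg hDg hDg hDg hbg hbg hbg hbg
  constructor
  · rw [boxJ_eq_row μX μY hKfg]
    exact integral_nonneg fun q => mul_self_nonneg _
  · rw [boxJ_eq_col μX μY hKfg, boxJ_eq_col μX μY hKff, boxJ_eq_col μX μY hKgg]
    exact sq_integral_mul_le_cs (col_sm μY hf hf) (col_sm μY hg hg)
      (fun a => int_mul_abs_le (fun y => hbf _) (fun y => hbf _) hDf)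
      (fun a => int_mul_abs_le (fun y => hbg _) (fun y => hbg _) hDg)

end Gowers2

/-- The Gowers box norm `‖f‖_{□²}` of `f : X × Y → ℝ`, the nonnegative fourth
root of `∫∫∫∫ f(x,y) f(x,y') f(x',y) f(x',y')`. -/
noncomputable def boxNorm {X Y : Type*} [MeasurableSpace X] [MeasurableSpace Y]
    (μX : Measure X) (μY : Measure Y) (f : X × Y → ℝ) : ℝ :=
  (∫ x, ∫ x', ∫ y, ∫ y',
      f (x, y) * f (x, y') * f (x', y) * f (x', y') ∂μY ∂μY ∂μX ∂μX) ^ ((1 : ℝ) / 4)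

/-- **Gowers–Cauchy–Schwarz inequality** for the box norm. -/
theorem gowers_cauchy_schwarz {X Y : Type*} [MeasurableSpace X] [MeasurableSpace Y]
    (μX : Measure X) (μY : Measure Y)
    [IsProbabilityMeasure μX] [IsProbabilityMeasure μY]
    (f₀₀ f₀₁ f₁₀ f₁₁ : X × Y → ℝ)
    (h₀₀ : Measurable f₀₀) (h₀₁ : Measurable f₀₁)
    (h₁₀ : Measurable f₁₀) (h₁₁ : Measurable f₁₁)
    (hb₀₀ : ∃ C, ∀ p, |f₀₀ p| ≤ C) (hb₀₁ : ∃ C, ∀ p, |f₀₁ p| ≤ C)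
    (hb₁₀ : ∃ C, ∀ p, |f₁₀ p| ≤ C) (hb₁₁ : ∃ C, ∀ p, |f₁₁ p| ≤ C) :
    |∫ x, ∫ x', ∫ y, ∫ y',
        f₀₀ (x, y) * f₀₁ (x, y') * f₁₀ (x', y) * f₁₁ (x', y') ∂μY ∂μY ∂μX ∂μX|
      ≤ boxNorm μX μY f₀₀ * boxNorm μX μY f₀₁ * boxNorm μX μY f₁₀ *
          boxNorm μX μY f₁₁ := by
  obtain ⟨C₀₀, hC₀₀⟩ := hb₀₀
  obtain ⟨C₀₁, hC₀₁⟩ := hb₀₁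
  obtain ⟨C₁₀, hC₁₀⟩ := hb₁₀
  obtain ⟨C₁₁, hC₁₁⟩ := hb₁₁
  have hd₀₀ : ∀ p, |f₀₀ p| ≤ |C₀₀| := fun p => (hC₀₀ p).trans (le_abs_self _)
  have hd₀₁ : ∀ p, |f₀₁ p| ≤ |C₀₁| := fun p => (hC₀₁ p).trans (le_abs_self _)
  have hd₁₀ : ∀ p, |f₁₀ p| ≤ |C₁₀| := fun p => (hC₁₀ p).trans (le_abs_self _)
  have hd₁₁ : ∀ p, |f₁₁ p| ≤ |C₁₁| := fun p => (hC₁₁ p).trans (le_abs_self _)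
  have hbox : ∀ (f : X × Y → ℝ), Measurable f → ∀ (C : ℝ), (∀ p, |f p| ≤ |C|) →
      boxNorm μX μY f = (boxJ μX μY f f f f) ^ ((1 : ℝ) / 4) := by
    intro f hf C hbf
    rw [boxNorm, iterated_eq_boxJ μX μY hf hf hf hf (abs_nonneg C) (abs_nonneg C)
      (abs_nonneg C) hbf hbf hbf hbf]
  rw [iterated_eq_boxJ μX μY h₀₀ h₀₁ h₁₀ h₁₁ (abs_nonneg _) (abs_nonneg _) (abs_nonneg _)
      hd₀₀ hd₀₁ hd₁₀ hd₁₁,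
    hbox f₀₀ h₀₀ C₀₀ hd₀₀, hbox f₀₁ h₀₁ C₀₁ hd₀₁, hbox f₁₀ h₁₀ C₁₀ hd₁₀,
    hbox f₁₁ h₁₁ C₁₁ hd₁₁]
  set I := boxJ μX μY f₀₀ f₀₁ f₁₀ f₁₁ with hIdef
  set M₀ := boxJ μX μY f₀₀ f₀₁ f₀₀ f₀₁ with hM₀def
  set M₁ := boxJ μX μY f₁₀ f₁₁ f₁₀ f₁₁ with hM₁def
  set N₀₀ := boxJ μX μY f₀₀ f₀₀ f₀₀ f₀₀ with hN₀₀def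
  set N₀₁ := boxJ μX μY f₀₁ f₀₁ f₀₁ f₀₁ with hN₀₁def
  set N₁₀ := boxJ μX μY f₁₀ f₁₀ f₁₀ f₁₀ with hN₁₀def
  set N₁₁ := boxJ μX μY f₁₁ f₁₁ f₁₁ f₁₁ with hN₁₁def
  obtain ⟨hM₀nn, hM₀sq⟩ := boxJ_mixed μX μY h₀₀ h₀₁ (abs_nonneg C₀₀) (abs_nonneg C₀₁) hd₀₀ hd₀₁
  obtain ⟨hM₁nn, hM₁sq⟩ := boxJ_mixed μX μY h₁₀ h₁₁ (abs_nonneg C₁₀) (abs_nonneg C₁₁) hd₁₀ hd₁₁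
  have hN₀₀nn := (boxJ_mixed μX μY h₀₀ h₀₀ (abs_nonneg C₀₀) (abs_nonneg C₀₀) hd₀₀ hd₀₀).1
  have hN₀₁nn := (boxJ_mixed μX μY h₀₁ h₀₁ (abs_nonneg C₀₁) (abs_nonneg C₀₁) hd₀₁ hd₀₁).1
  have hN₁₀nn := (boxJ_mixed μX μY h₁₀ h₁₀ (abs_nonneg C₁₀) (abs_nonneg C₁₀) hd₁₀ hd₁₀).1
  have hN₁₁nn := (boxJ_mixed μX μY h₁₁ h₁₁ (abs_nonneg C₁₁) (abs_nonneg C₁₁) hd₁₁ hd₁₁).1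
  have hKI := boxK_integrable μX μY h₀₀ h₀₁ h₁₀ h₁₁ (abs_nonneg C₀₀) (abs_nonneg C₀₁)
    (abs_nonneg C₁₀) hd₀₀ hd₀₁ hd₁₀ hd₁₁
  have hK01 := boxK_integrable μX μY h₀₀ h₀₁ h₀₀ h₀₁ (abs_nonneg C₀₀) (abs_nonneg C₀₁)
    (abs_nonneg C₀₀) hd₀₀ hd₀₁ hd₀₀ hd₀₁
  have hK23 := boxK_integrable μX μY h₁₀ h₁₁ h₁₀ h₁₁ (abs_nonneg C₁₀) (abs_nonneg C₁₁)
    (abs_nonneg C₁₀) hd₁₀ hd₁₁ hd₁₀ hd₁₁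
  have hIsq : I ^ 2 ≤ M₀ * M₁ := by
    rw [hIdef, hM₀def, hM₁def, boxJ_eq_row μX μY hKI, boxJ_eq_row μX μY hK01,
      boxJ_eq_row μX μY hK23]
    exact sq_integral_mul_le_cs (row_sm μX h₀₀ h₀₁) (row_sm μX h₁₀ h₁₁)
      (fun q => int_mul_abs_le (fun x => hd₀₀ _) (fun x => hd₀₁ _) (abs_nonneg C₀₀))
      (fun q => int_mul_abs_le (fun x => hd₁₀ _) (fun x => hd₁₁ _) (abs_nonneg C₁₀))
  -- numerical conclusion
  have rpow_eq : ∀ N : ℝ, 0 ≤ N → N ^ ((1 : ℝ) / 4) = Real.sqrt (Real.sqrt N) := by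
    intro N hN
    rw [Real.sqrt_eq_rpow, Real.sqrt_eq_rpow, ← Real.rpow_mul hN]
    norm_num
  rw [rpow_eq N₀₀ hN₀₀nn, rpow_eq N₀₁ hN₀₁nn, rpow_eq N₁₀ hN₁₀nn, rpow_eq N₁₁ hN₁₁nn]
  have key : ∀ M N₁ N₂ : ℝ, 0 ≤ M → 0 ≤ N₁ → M ^ 2 ≤ N₁ * N₂ →
      Real.sqrt M ≤ Real.sqrt (Real.sqrt N₁) * Real.sqrt (Real.sqrt N₂) := by
    intro M N₁ N₂ hM hN₁ h
    have h1 : M ≤ Real.sqrt N₁ * Real.sqrt N₂ := by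
      rw [← Real.sqrt_mul hN₁]
      calc M = Real.sqrt (M ^ 2) := (Real.sqrt_sq hM).symm
        _ ≤ Real.sqrt (N₁ * N₂) := Real.sqrt_le_sqrt h
    calc Real.sqrt M ≤ Real.sqrt (Real.sqrt N₁ * Real.sqrt N₂) := Real.sqrt_le_sqrt h1
      _ = Real.sqrt (Real.sqrt N₁) * Real.sqrt (Real.sqrt N₂) :=
        Real.sqrt_mul (Real.sqrt_nonneg _) _
  calc |I| = Real.sqrt (I ^ 2) := (Real.sqrt_sq_eq_abs I).symm
    _ ≤ Real.sqrt (M₀ * M₁) := Real.sqrt_le_sqrt hIsq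
    _ = Real.sqrt M₀ * Real.sqrt M₁ := Real.sqrt_mul hM₀nn _
    _ ≤ (Real.sqrt (Real.sqrt N₀₀) * Real.sqrt (Real.sqrt N₀₁)) *
        (Real.sqrt (Real.sqrt N₁₀) * Real.sqrt (Real.sqrt N₁₁)) :=
      mul_le_mul (key _ _ _ hM₀nn hN₀₀nn hM₀sq) (key _ _ _ hM₁nn hN₁₀nn hM₁sq)
        (Real.sqrt_nonneg _)
        (mul_nonneg (Real.sqrt_nonneg _) (Real.sqrt_nonneg _))
    _ = Real.sqrt (Real.sqrt N₀₀) * Real.sqrt (Real.sqrt N₀₁) * Real.sqrt (Real.sqrt N₁₀) *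
        Real.sqrt (Real.sqrt N₁₁) := by ring
end

section
/- Let (X, μ_X), (Y, μ_Y), (Z, μ_Z) be probability spaces and let f : X×Y → [−1,1], g : Y×Z → [−1,1], h : Z×X → [−1,1] be measurable. Then |Λ₃(f, g, h)| ≤ min( ‖f‖_{□²}, ‖g‖_{□²}, ‖h‖_{□²} ). -/
/-!
Read `f`, `g`, `h` as integral kernels, with composition `kernelComp`. Then `Λ₃(f, g, h)` is
the pairing of `f ∘ g` with `hᵀ`, and two applications of Cauchy–Schwarz, each against a kernel
bounded by `1`, give `Λ₃² ≤ ‖f ∘ g‖²` and `‖f ∘ g‖⁴ = ⟨fᵀ ∘ f, g ∘ gᵀ⟩² ≤ ‖fᵀ ∘ f‖²`. Expanding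
`‖fᵀ ∘ f‖²` gives exactly `‖f‖_{□²}⁴`. The bounds by the box norms of `g` and `h` follow from
the cyclic symmetry `Λ₃(f, g, h) = Λ₃(g, h, f)`.
-/

open MeasureTheory

lemma abs_mul_le_one_of_abs_le_one {a b : ℝ} (ha : |a| ≤ 1) (hb : |b| ≤ 1) : |a * b| ≤ 1 := by
  rw [abs_mul]
  exact mul_le_one₀ ha (abs_nonneg b) hb

lemma abs_le_rpow_one_div_four_of_pow_four_le {t B : ℝ} (h : t ^ 4 ≤ B) :
    |t| ≤ B ^ ((1 : ℝ) / 4) := by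
  calc |t| = (|t| ^ 4) ^ ((1 : ℝ) / 4) := by
        rw [one_div]; exact_mod_cast (Real.pow_rpow_inv_natCast (abs_nonneg t) four_ne_zero).symm
    _ ≤ B ^ ((1 : ℝ) / 4) :=
        Real.rpow_le_rpow (by positivity) (by rwa [Even.pow_abs ⟨2, rfl⟩]) (by norm_num)

section Bounded

variable {α : Type*} [MeasurableSpace α] {μ : Measure α}

lemma integrable_of_abs_le_one [IsFiniteMeasure μ] {u : α → ℝ} (hu : AEStronglyMeasurable u μ)
    (hu1 : ∀ a, |u a| ≤ 1) : Integrable u μ :=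
  .of_bound hu 1 (ae_of_all _ hu1)

lemma memLp_of_abs_le_one [IsFiniteMeasure μ] {u : α → ℝ} (hu : AEStronglyMeasurable u μ)
    (hu1 : ∀ a, |u a| ≤ 1) (p : ENNReal) : MemLp u p μ :=
  .of_bound hu 1 (ae_of_all _ hu1)

lemma abs_integral_le_one [IsProbabilityMeasure μ] {u : α → ℝ} (hu1 : ∀ a, |u a| ≤ 1) :
    |∫ a, u a ∂μ| ≤ 1 := by
  simpa using norm_integral_le_of_norm_le_const (f := u) (C := 1) (ae_of_all μ hu1)

lemma sq_integral_le_integral_sq [IsProbabilityMeasure μ] {u : α → ℝ} (hu : MemLp u 2 μ) :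
    (∫ a, u a ∂μ) ^ 2 ≤ ∫ a, u a ^ 2 ∂μ := by
  have hvar := ProbabilityTheory.variance_nonneg u μ
  rw [ProbabilityTheory.variance_eq_sub hu] at hvar
  simpa using hvar

lemma sq_integral_mul_le_integral_sq [IsProbabilityMeasure μ] {u v : α → ℝ} (hu : MemLp u 2 μ)
    (hv : AEStronglyMeasurable v μ) (hv1 : ∀ᵐ a ∂μ, |v a| ≤ 1) :
    (∫ a, u a * v a ∂μ) ^ 2 ≤ ∫ a, u a ^ 2 ∂μ := by
  have hu_int : Integrable u μ := hu.integrable one_le_two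
  have huv_le : ∀ᵐ a ∂μ, |u a * v a| ≤ |u a| := by
    filter_upwards [hv1] with a ha
    rw [abs_mul]
    exact mul_le_of_le_one_right (abs_nonneg _) ha
  have huv_int : Integrable (fun a => u a * v a) μ :=
    hu_int.mono (hu.aestronglyMeasurable.mul hv) (by simpa using huv_le)
  have habs : |∫ a, u a * v a ∂μ| ≤ ∫ a, |u a| ∂μ :=
    (abs_integral_le_integral_abs).trans (integral_mono_ae huv_int.abs hu_int.abs huv_le)
  calc (∫ a, u a * v a ∂μ) ^ 2 = |∫ a, u a * v a ∂μ| ^ 2 := (sq_abs _).symm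
    _ ≤ (∫ a, |u a| ∂μ) ^ 2 := pow_le_pow_left₀ (abs_nonneg _) habs 2
    _ ≤ ∫ a, |u a| ^ 2 ∂μ := sq_integral_le_integral_sq hu.abs
    _ = ∫ a, u a ^ 2 ∂μ := by simp_rw [sq_abs]

end Bounded

noncomputable def kernelComp {X Y Z : Type*} [MeasurableSpace Y] (μY : Measure Y)
    (f : X × Y → ℝ) (g : Y × Z → ℝ) (p : X × Z) : ℝ :=
  ∫ y, f (p.1, y) * g (y, p.2) ∂μY

lemma abs_kernelComp_le_one {X Y Z : Type*} [MeasurableSpace Y] {μY : Measure Y}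
    [IsProbabilityMeasure μY] {f : X × Y → ℝ} {g : Y × Z → ℝ} (hf1 : ∀ p, |f p| ≤ 1)
    (hg1 : ∀ p, |g p| ≤ 1) (p : X × Z) : |kernelComp μY f g p| ≤ 1 :=
  abs_integral_le_one fun _ => abs_mul_le_one_of_abs_le_one (hf1 _) (hg1 _)

section Kernels

variable {X Y Z : Type*} [MeasurableSpace X] [MeasurableSpace Y] [MeasurableSpace Z]
  {μX : Measure X} {μY : Measure Y} {μZ : Measure Z} {f : X × Y → ℝ} {g : Y × Z → ℝ}

lemma stronglyMeasurable_kernelComp [SFinite μY] (hf : Measurable f) (hg : Measurable g) :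
    StronglyMeasurable (kernelComp μY f g) :=
  (show Measurable fun q : (X × Z) × Y => f (q.1.1, q.2) * g (q.2, q.1.2) by fun_prop)
    |>.stronglyMeasurable.integral_prod_right'

lemma integral_sq_kernelComp [IsFiniteMeasure μX] [IsFiniteMeasure μY] [IsFiniteMeasure μZ]
    (hf : Measurable f) (hg : Measurable g) (hf1 : ∀ p, |f p| ≤ 1) (hg1 : ∀ p, |g p| ≤ 1) :
    ∫ p, kernelComp μY f g p ^ 2 ∂(μX.prod μZ)
      = ∫ q, kernelComp μX (f ∘ Prod.swap) f q * kernelComp μZ g (g ∘ Prod.swap) q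
          ∂(μY.prod μY) := by
  have hint : Integrable (Function.uncurry fun (p : X × Z) (q : Y × Y) =>
      f (p.1, q.1) * g (q.1, p.2) * (f (p.1, q.2) * g (q.2, p.2)))
      ((μX.prod μZ).prod (μY.prod μY)) :=
    integrable_of_abs_le_one (by fun_prop) fun _ =>
      abs_mul_le_one_of_abs_le_one (abs_mul_le_one_of_abs_le_one (hf1 _) (hg1 _))
        (abs_mul_le_one_of_abs_le_one (hf1 _) (hg1 _))
  calc ∫ p, kernelComp μY f g p ^ 2 ∂(μX.prod μZ)
      = ∫ p : X × Z, ∫ q : Y × Y, f (p.1, q.1) * g (q.1, p.2) * (f (p.1, q.2) * g (q.2, p.2))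
          ∂(μY.prod μY) ∂(μX.prod μZ) := by
        simp_rw [sq, kernelComp, ← integral_prod_mul]
    _ = ∫ q : Y × Y, ∫ p : X × Z, f (p.1, q.1) * g (q.1, p.2) * (f (p.1, q.2) * g (q.2, p.2))
          ∂(μX.prod μZ) ∂(μY.prod μY) := integral_integral_swap hint
    _ = _ := by
        congr 1 with q
        simp_rw [kernelComp, ← integral_prod_mul, Function.comp_apply, Prod.swap_prod_mk]
        congr 1 with p
        ring

end Kernels

section Trilinear

variable {X Y Z : Type*} [MeasurableSpace X] [MeasurableSpace Y] [MeasurableSpace Z]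
  {μX : Measure X} {μY : Measure Y} {μZ : Measure Z}
  {f : X × Y → ℝ} {g : Y × Z → ℝ} {h : Z × X → ℝ}

/-- The paper's `Λ₃(f, g, h)`. -/
noncomputable def trilinearForm (μX : Measure X) (μY : Measure Y) (μZ : Measure Z)
    (f : X × Y → ℝ) (g : Y × Z → ℝ) (h : Z × X → ℝ) : ℝ :=
  ∫ x, ∫ y, ∫ z, f (x, y) * g (y, z) * h (z, x) ∂μZ ∂μY ∂μX

lemma trilinearForm_eq_integral_prod [IsFiniteMeasure μX] [IsFiniteMeasure μY]
    [IsFiniteMeasure μZ] (hf : Measurable f) (hg : Measurable g) (hh : Measurable h)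
    (hf1 : ∀ p, |f p| ≤ 1) (hg1 : ∀ p, |g p| ≤ 1) (hh1 : ∀ p, |h p| ≤ 1) :
    trilinearForm μX μY μZ f g h
      = ∫ w, f (w.1, w.2.1) * g w.2 * h (w.2.2, w.1) ∂(μX.prod (μY.prod μZ)) := by
  have hbound : ∀ x y z, |f (x, y) * g (y, z) * h (z, x)| ≤ 1 := fun _ _ _ =>
    abs_mul_le_one_of_abs_le_one (abs_mul_le_one_of_abs_le_one (hf1 _) (hg1 _)) (hh1 _)
  have hint : Integrable (fun w : X × Y × Z => f (w.1, w.2.1) * g w.2 * h (w.2.2, w.1))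
      (μX.prod (μY.prod μZ)) :=
    integrable_of_abs_le_one (by fun_prop) fun _ => hbound _ _ _
  rw [trilinearForm, integral_prod _ hint]
  congr 1 with x
  exact (integral_prod (fun w : Y × Z => f (x, w.1) * g w * h (w.2, x))
    (integrable_of_abs_le_one (by fun_prop) fun _ => hbound _ _ _)).symm

lemma trilinearForm_rotate [IsFiniteMeasure μX] [IsFiniteMeasure μY] [IsFiniteMeasure μZ]
    (hf : Measurable f) (hg : Measurable g) (hh : Measurable h)
    (hf1 : ∀ p, |f p| ≤ 1) (hg1 : ∀ p, |g p| ≤ 1) (hh1 : ∀ p, |h p| ≤ 1) :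
    trilinearForm μX μY μZ f g h = trilinearForm μY μZ μX g h f := by
  rw [trilinearForm_eq_integral_prod hf hg hh hf1 hg1 hh1,
    trilinearForm_eq_integral_prod hg hh hf hg1 hh1 hf1, ← integral_prod_swap,
    ← (measurePreserving_prodAssoc μY μZ μX).integral_comp']
  congr 1 with w
  simp only [Prod.fst_swap, Prod.snd_swap, MeasurableEquiv.prodAssoc, Equiv.prodAssoc_apply,
    MeasurableEquiv.coe_mk]
  ring

lemma trilinearForm_eq_integral_kernelComp [IsFiniteMeasure μX] [IsProbabilityMeasure μY]
    [IsFiniteMeasure μZ] (hf : Measurable f) (hg : Measurable g) (hh : Measurable h)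
    (hf1 : ∀ p, |f p| ≤ 1) (hg1 : ∀ p, |g p| ≤ 1) (hh1 : ∀ p, |h p| ≤ 1) :
    trilinearForm μX μY μZ f g h = ∫ p, kernelComp μY f g p * h p.swap ∂(μX.prod μZ) := by
  have hint : Integrable (fun p : X × Z => kernelComp μY f g p * h p.swap) (μX.prod μZ) :=
    integrable_of_abs_le_one
      ((stronglyMeasurable_kernelComp hf hg).aestronglyMeasurable.mul
        (hh.comp measurable_swap).aestronglyMeasurable) fun p =>
      abs_mul_le_one_of_abs_le_one (abs_kernelComp_le_one hf1 hg1 p) (hh1 _)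
  rw [trilinearForm, integral_prod _ hint]
  congr 1 with x
  rw [integral_integral_swap (f := fun y z => f (x, y) * g (y, z) * h (z, x))
    (integrable_of_abs_le_one (by fun_prop) fun _ =>
      abs_mul_le_one_of_abs_le_one (abs_mul_le_one_of_abs_le_one (hf1 _) (hg1 _)) (hh1 _))]
  congr 1 with z
  exact integral_mul_const _ _

lemma integral_box_eq_integral_sq_kernelComp [IsFiniteMeasure μX] [IsProbabilityMeasure μY]
    (hf : Measurable f) (hf1 : ∀ p, |f p| ≤ 1) :
    ∫ x, ∫ x', ∫ y, ∫ y', f (x, y) * f (x, y') * f (x', y) * f (x', y') ∂μY ∂μY ∂μX ∂μX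
      = ∫ q, kernelComp μX (f ∘ Prod.swap) f q ^ 2 ∂(μY.prod μY) := by
  have hfT1 : ∀ p, |(f ∘ Prod.swap) p| ≤ 1 := fun _ => hf1 _
  rw [integral_sq_kernelComp (hf.comp measurable_swap) hf hfT1 hf1]
  have hint : Integrable (fun q : X × X =>
      kernelComp μY ((f ∘ Prod.swap) ∘ Prod.swap) (f ∘ Prod.swap) q
        * kernelComp μY f (f ∘ Prod.swap) q) (μX.prod μX) :=
    integrable_of_abs_le_one
      (((stronglyMeasurable_kernelComp hf (hf.comp measurable_swap)).mul
        (stronglyMeasurable_kernelComp hf (hf.comp measurable_swap))).aestronglyMeasurable)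
      fun q => abs_mul_le_one_of_abs_le_one (abs_kernelComp_le_one hf1 hfT1 q)
        (abs_kernelComp_le_one hf1 hfT1 q)
  rw [integral_prod _ hint]
  congr 1 with x
  congr 1 with x'
  simp only [kernelComp, Function.comp_apply, Prod.swap_prod_mk]
  rw [← integral_mul_const]
  congr 1 with y
  rw [← integral_const_mul]
  congr 1 with y'
  ring

lemma trilinearForm_pow_four_le [IsProbabilityMeasure μX] [IsProbabilityMeasure μY]
    [IsProbabilityMeasure μZ] (hf : Measurable f) (hg : Measurable g) (hh : Measurable h)
    (hf1 : ∀ p, |f p| ≤ 1) (hg1 : ∀ p, |g p| ≤ 1) (hh1 : ∀ p, |h p| ≤ 1) :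
    trilinearForm μX μY μZ f g h ^ 4
      ≤ ∫ q, kernelComp μX (f ∘ Prod.swap) f q ^ 2 ∂(μY.prod μY) := by
  have hfT1 : ∀ p, |(f ∘ Prod.swap) p| ≤ 1 := fun _ => hf1 _
  have hgT1 : ∀ p, |(g ∘ Prod.swap) p| ≤ 1 := fun _ => hg1 _
  have hΛ : trilinearForm μX μY μZ f g h ^ 2 ≤ ∫ p, kernelComp μY f g p ^ 2 ∂(μX.prod μZ) := by
    rw [trilinearForm_eq_integral_kernelComp hf hg hh hf1 hg1 hh1]
    exact sq_integral_mul_le_integral_sq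
      (memLp_of_abs_le_one (stronglyMeasurable_kernelComp hf hg).aestronglyMeasurable
        (abs_kernelComp_le_one hf1 hg1) 2)
      (hh.comp measurable_swap).aestronglyMeasurable (ae_of_all _ fun _ => hh1 _)
  have hfg : (∫ p, kernelComp μY f g p ^ 2 ∂(μX.prod μZ)) ^ 2
      ≤ ∫ q, kernelComp μX (f ∘ Prod.swap) f q ^ 2 ∂(μY.prod μY) := by
    rw [integral_sq_kernelComp hf hg hf1 hg1]
    exact sq_integral_mul_le_integral_sq
      (memLp_of_abs_le_one
        (stronglyMeasurable_kernelComp (hf.comp measurable_swap) hf).aestronglyMeasurable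
        (abs_kernelComp_le_one hfT1 hf1) 2)
      (stronglyMeasurable_kernelComp hg (hg.comp measurable_swap)).aestronglyMeasurable
      (ae_of_all _ (abs_kernelComp_le_one hg1 hgT1))
  calc trilinearForm μX μY μZ f g h ^ 4 = (trilinearForm μX μY μZ f g h ^ 2) ^ 2 := by ring
    _ ≤ (∫ p, kernelComp μY f g p ^ 2 ∂(μX.prod μZ)) ^ 2 := pow_le_pow_left₀ (sq_nonneg _) hΛ 2
    _ ≤ _ := hfg

lemma abs_trilinearForm_le_boxNorm [IsProbabilityMeasure μX] [IsProbabilityMeasure μY]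
    [IsProbabilityMeasure μZ] (hf : Measurable f) (hg : Measurable g) (hh : Measurable h)
    (hf1 : ∀ p, |f p| ≤ 1) (hg1 : ∀ p, |g p| ≤ 1) (hh1 : ∀ p, |h p| ≤ 1) :
    |trilinearForm μX μY μZ f g h| ≤ boxNorm μX μY f := by
  rw [boxNorm, integral_box_eq_integral_sq_kernelComp hf hf1]
  exact abs_le_rpow_one_div_four_of_pow_four_le (trilinearForm_pow_four_le hf hg hh hf1 hg1 hh1)

end Trilinear

/-- **Generalised von Neumann inequality**: `|Λ₃(f, g, h)|` is bounded by the
minimum of the box norms of `f`, `g`, `h`. -/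
theorem generalised_von_neumann {X Y Z : Type*}
    [MeasurableSpace X] [MeasurableSpace Y] [MeasurableSpace Z]
    (μX : Measure X) (μY : Measure Y) (μZ : Measure Z)
    [IsProbabilityMeasure μX] [IsProbabilityMeasure μY] [IsProbabilityMeasure μZ]
    (f : X × Y → ℝ) (g : Y × Z → ℝ) (h : Z × X → ℝ)
    (hf : Measurable f) (hg : Measurable g) (hh : Measurable h)
    (hf1 : ∀ p, f p ∈ Set.Icc (-1 : ℝ) 1) (hg1 : ∀ p, g p ∈ Set.Icc (-1 : ℝ) 1)
    (hh1 : ∀ p, h p ∈ Set.Icc (-1 : ℝ) 1) :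
    |∫ x, ∫ y, ∫ z, f (x, y) * g (y, z) * h (z, x) ∂μZ ∂μY ∂μX|
      ≤ min (boxNorm μX μY f) (min (boxNorm μY μZ g) (boxNorm μZ μX h)) := by
  replace hf1 : ∀ p, |f p| ≤ 1 := fun p => abs_le.2 (hf1 p)
  replace hg1 : ∀ p, |g p| ≤ 1 := fun p => abs_le.2 (hg1 p)
  replace hh1 : ∀ p, |h p| ≤ 1 := fun p => abs_le.2 (hh1 p)
  have hfgh := trilinearForm_rotate (μX := μX) (μY := μY) (μZ := μZ) hf hg hh hf1 hg1 hh1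
  have hghf := trilinearForm_rotate (μX := μY) (μY := μZ) (μZ := μX) hg hh hf hg1 hh1 hf1
  change |trilinearForm μX μY μZ f g h| ≤ _
  refine le_min ?_ (le_min ?_ ?_)
  · exact abs_trilinearForm_le_boxNorm hf hg hh hf1 hg1 hh1
  · rw [hfgh]
    exact abs_trilinearForm_le_boxNorm hg hh hf hg1 hh1 hf1
  · rw [hfgh, hghf]
    exact abs_trilinearForm_le_boxNorm hh hf hg hh1 hf1 hg1
end

section
/- Let (X, μ_X) and (Y, μ_Y) be probability spaces and let f : X×Y → [−1,1] be measurable with ‖f‖_{□²} ≥ η for some η > 0. Then there exist measurable sets A ⊆ X and B ⊆ Y such that |∫_X ∫_Y 1_A(x) 1_B(y) f(x,y) dμ_X(x) dμ_Y(y)| ≥ η⁴/4. -/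
/-!
With `K x x' = ∫ f(x,y) f(x',y) dy` one has `‖f‖_{□²}⁴ = ∫∫ K(x,x')² dx dx'`, so for some `x₀`
the integral `∫∫ K(x₀,x) f(x₀,y) f(x,y) dx dy` is at least `η⁴`: `f` correlates with a product
`u(x) v(y)` of two `[-1,1]`-valued functions. Such a correlation passes to indicators at the cost
of a factor `2` per variable, since for `|u| ≤ 1` we have `|∫ u F| ≤ ∫ |F| ≤ 2 |∫_A F|` with
`A = {F ≥ 0}` or its complement.
-/

open MeasureTheory

section Correlation

variable {α β : Type*} [MeasurableSpace α] [MeasurableSpace β] {μ : Measure α} {ν : Measure β}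

lemma exists_measurableSet_integral_abs_le_two_mul {F : α → ℝ} (hF : Integrable F μ)
    (hFm : Measurable F) :
    ∃ A, MeasurableSet A ∧ ∫ x, |F x| ∂μ ≤ 2 * |∫ x in A, F x ∂μ| := by
  have hA : MeasurableSet {x | 0 ≤ F x} := measurableSet_le measurable_const hFm
  have h_pos : ∫ x in {x | 0 ≤ F x}, |F x| ∂μ = ∫ x in {x | 0 ≤ F x}, F x ∂μ :=
    setIntegral_congr_fun hA fun x hx => abs_of_nonneg hx
  have h_neg : ∫ x in {x | 0 ≤ F x}ᶜ, |F x| ∂μ = -∫ x in {x | 0 ≤ F x}ᶜ, F x ∂μ := by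
    rw [← integral_neg]
    exact setIntegral_congr_fun hA.compl fun x hx => abs_of_neg (not_le.mp hx)
  have h_split := integral_add_compl hA hF.abs
  rcases le_total (∫ x in {x | 0 ≤ F x}ᶜ, |F x| ∂μ) (∫ x in {x | 0 ≤ F x}, |F x| ∂μ) with h | h
  · exact ⟨_, hA, by linarith [le_abs_self (∫ x in {x | 0 ≤ F x}, F x ∂μ)]⟩
  · exact ⟨_, hA.compl, by linarith [neg_le_abs (∫ x in {x | 0 ≤ F x}ᶜ, F x ∂μ)]⟩

lemma exists_measurableSet_abs_integral_mul_le {F : α → ℝ} (hF : Integrable F μ)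
    (hFm : Measurable F) {u : α → ℝ} (hu : ∀ x, |u x| ≤ 1) :
    ∃ A, MeasurableSet A ∧
      |∫ x, u x * F x ∂μ| ≤ 2 * |∫ x, A.indicator (fun _ => 1) x * F x ∂μ| := by
  obtain ⟨A, hA, hAF⟩ := exists_measurableSet_integral_abs_le_two_mul hF hFm
  refine ⟨A, hA, ?_⟩
  have h_weight : |∫ x, u x * F x ∂μ| ≤ ∫ x, |F x| ∂μ :=
    norm_integral_le_of_norm_le (f := fun x => u x * F x) hF.abs <| .of_forall fun x => by
      simpa [abs_mul] using mul_le_of_le_one_left (abs_nonneg (F x)) (hu x)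
  have h_ind : ∫ x in A, F x ∂μ = ∫ x, A.indicator (fun _ => 1) x * F x ∂μ := by
    rw [← integral_indicator hA]
    simp only [← Set.indicator_mul_left, one_mul]
  linarith [h_ind ▸ hAF]

lemma integral_integral_mul_mul_eq (u : α → ℝ) (v : β → ℝ) (f : α × β → ℝ) :
    ∫ x, ∫ y, u x * v y * f (x, y) ∂ν ∂μ = ∫ x, u x * ∫ y, v y * f (x, y) ∂ν ∂μ := by
  congr 1 with x
  rw [← integral_const_mul]
  congr 1 with y
  ring

lemma integral_integral_mul_mul_swap [SFinite μ] [SFinite ν] {u : α → ℝ} {v : β → ℝ}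
    {f : α × β → ℝ} (h : Integrable (fun p => u p.1 * v p.2 * f p) (μ.prod ν)) :
    ∫ x, ∫ y, u x * v y * f (x, y) ∂ν ∂μ = ∫ y, v y * ∫ x, u x * f (x, y) ∂μ ∂ν := by
  rw [integral_integral_swap h]
  congr 1 with y
  rw [← integral_const_mul]
  congr 1 with x
  ring

lemma MeasureTheory.Integrable.mul_of_abs_le_one {f g : α → ℝ} (hf : Integrable f μ)
    (hg : Measurable g) (hg1 : ∀ x, |g x| ≤ 1) : Integrable (fun x => g x * f x) μ :=
  hf.bdd_mul hg.aestronglyMeasurable (.of_forall hg1)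

lemma exists_measurableSet_abs_integral_mul_mul_le [SFinite μ] [SFinite ν] {f : α × β → ℝ}
    (hf : Measurable f) (hfi : Integrable f (μ.prod ν)) {u : α → ℝ} {v : β → ℝ}
    (hu : Measurable u) (hu1 : ∀ x, |u x| ≤ 1) (hv : Measurable v) (hv1 : ∀ y, |v y| ≤ 1) :
    ∃ A B, MeasurableSet A ∧ MeasurableSet B ∧
      |∫ x, ∫ y, u x * v y * f (x, y) ∂ν ∂μ| ≤ 4 *
        |∫ x, ∫ y, A.indicator (fun _ => 1) x * B.indicator (fun _ => 1) y * f (x, y) ∂ν ∂μ| := by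
  have h_weighted {v : β → ℝ} (hv : Measurable v) (hv1 : ∀ y, |v y| ≤ 1) :
      Integrable (fun p => u p.1 * v p.2 * f p) (μ.prod ν) :=
    hfi.mul_of_abs_le_one (by fun_prop) fun p => by
      simpa [abs_mul] using mul_le_one₀ (hu1 p.1) (abs_nonneg _) (hv1 p.2)
  obtain ⟨B, hB, hvB⟩ := exists_measurableSet_abs_integral_mul_le
    (hfi.mul_of_abs_le_one (g := fun p => u p.1) (by fun_prop) fun p => hu1 p.1).integral_prod_right
    ((hu.comp measurable_fst).mul hf).stronglyMeasurable.integral_prod_left'.measurable hv1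
  have hB1 : Measurable (B.indicator fun _ => (1 : ℝ)) := measurable_const.indicator hB
  have hB1' (y : β) : |B.indicator (fun _ => (1 : ℝ)) y| ≤ 1 := by
    simpa using norm_indicator_le_norm_self (s := B) (f := fun _ => (1 : ℝ)) (a := y)
  obtain ⟨A, hA, huA⟩ := exists_measurableSet_abs_integral_mul_le
    (hfi.mul_of_abs_le_one (g := fun p => B.indicator (fun _ => 1) p.2) (by fun_prop)
      fun p => hB1' p.2).integral_prod_left
    ((hB1.comp measurable_snd).mul hf).stronglyMeasurable.integral_prod_right'.measurable hu1
  refine ⟨A, B, hA, hB, ?_⟩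
  rw [integral_integral_mul_mul_swap (h_weighted hv hv1)]
  rw [← integral_integral_mul_mul_swap (h_weighted hB1 hB1')] at hvB
  rw [integral_integral_mul_mul_eq] at hvB ⊢
  linarith

end Correlation

section BoxNorm

variable {X Y : Type*} [MeasurableSpace X] [MeasurableSpace Y] (μX : Measure X) (μY : Measure Y)

lemma boxNorm_pow_four (f : X × Y → ℝ) :
    boxNorm μX μY f ^ 4 = ∫ x, ∫ x', (∫ y, f (x, y) * f (x', y) ∂μY) ^ 2 ∂μX ∂μX := by
  have h_sq (x x' : X) : ∫ y, ∫ y', f (x, y) * f (x, y') * f (x', y) * f (x', y') ∂μY ∂μY =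
      (∫ y, f (x, y) * f (x', y) ∂μY) ^ 2 := by
    rw [sq, ← integral_mul_const]
    congr 1 with y
    rw [← integral_const_mul]
    congr 1 with y'
    ring
  simp only [boxNorm, h_sq, one_div]
  exact Real.rpow_inv_natCast_pow (n := 4) (integral_nonneg fun x => integral_nonneg fun x' =>
    sq_nonneg _) (by norm_num)

lemma exists_boxNorm_pow_four_le_integral_mul_mul [IsProbabilityMeasure μX]
    [IsProbabilityMeasure μY] {f : X × Y → ℝ} (hf : Measurable f) (hf1 : ∀ p, |f p| ≤ 1) :
    ∃ (u : X → ℝ) (v : Y → ℝ), Measurable u ∧ (∀ x, |u x| ≤ 1) ∧ Measurable v ∧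
      (∀ y, |v y| ≤ 1) ∧ boxNorm μX μY f ^ 4 ≤ ∫ x, ∫ y, u x * v y * f (x, y) ∂μY ∂μX := by
  set K : X × X → ℝ := fun p => ∫ y, f (p.1, y) * f (p.2, y) ∂μY
  have hK : Measurable K := by
    have : Measurable fun q : (X × X) × Y => f (q.1.1, q.2) * f (q.1.2, q.2) := by fun_prop
    exact this.stronglyMeasurable.integral_prod_right'.measurable
  have hK1 (p : X × X) : |K p| ≤ 1 := by
    simpa using norm_integral_le_of_norm_le_const (μ := μY) (C := 1)
      (f := fun y => f (p.1, y) * f (p.2, y)) (.of_forall fun y => by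
        simpa [abs_mul] using mul_le_one₀ (hf1 (p.1, y)) (abs_nonneg _) (hf1 (p.2, y)))
  have hK2 : Integrable (fun p => K p ^ 2) (μX.prod μX) :=
    .of_bound (hK.pow_const 2).aestronglyMeasurable 1 (.of_forall fun p => by
      simpa using pow_le_one₀ (n := 2) (abs_nonneg _) (hK1 p))
  obtain ⟨x₀, hx₀⟩ := exists_integral_le hK2.integral_prod_left
  refine ⟨fun x => K (x₀, x), fun y => f (x₀, y), by fun_prop, fun x => hK1 _, by fun_prop,
    fun y => hf1 _, ?_⟩
  rw [boxNorm_pow_four, integral_integral_mul_mul_eq]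
  simpa only [sq] using hx₀

end BoxNorm

/-- **Lack of uniformity implies correlation with structure**: if
`‖f‖_{□²} ≥ η` then `f` correlates with a product set `A × B`. -/
theorem correlation_of_large_box_norm {X Y : Type*}
    [MeasurableSpace X] [MeasurableSpace Y]
    (μX : Measure X) (μY : Measure Y)
    [IsProbabilityMeasure μX] [IsProbabilityMeasure μY]
    (f : X × Y → ℝ) (hf : Measurable f)
    (hf1 : ∀ p, f p ∈ Set.Icc (-1 : ℝ) 1)
    (η : ℝ) (hη : 0 < η) (hbox : η ≤ boxNorm μX μY f) :
    ∃ (A : Set X) (B : Set Y), MeasurableSet A ∧ MeasurableSet B ∧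
      η ^ 4 / 4 ≤
        |∫ x, ∫ y, A.indicator (fun _ => (1 : ℝ)) x *
            B.indicator (fun _ => (1 : ℝ)) y * f (x, y) ∂μY ∂μX| := by
  have hf1' (p : X × Y) : |f p| ≤ 1 := abs_le.mpr (hf1 p)
  obtain ⟨u, v, hu, hu1, hv, hv1, huv⟩ :=
    exists_boxNorm_pow_four_le_integral_mul_mul μX μY hf hf1'
  have hfi : Integrable f (μX.prod μY) :=
    .of_bound hf.aestronglyMeasurable 1 (.of_forall hf1')
  obtain ⟨A, B, hA, hB, hAB⟩ := exists_measurableSet_abs_integral_mul_mul_le hf hfi hu hu1 hv hv1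
  refine ⟨A, B, hA, hB, ?_⟩
  have := pow_le_pow_left₀ hη.le hbox 4
  linarith [le_abs_self (∫ x, ∫ y, u x * v y * f (x, y) ∂μY ∂μX)]
end
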